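/- arXiv:2102.07032 — 6 statements merged into one kernel-verified Lean document; each statement's English description precedes it below -/
import Mathlib

section
/- Fix σ > 0 and M > 0. For ε > 0 let μ_ε denote the centered Gaussian measure on ℝ with variance ε·σ² (the law of √ε·X where X ~ N(0,σ²)). Then ε·log μ_ε([M,∞)) converges to −M²/(2σ²) as ε → 0+. -/
open MeasureTheory ProbabilityTheory Filter Set Topology

/-!
For `X ∼ N(μ, v)` the Chernoff bound for the sub-Gaussian variable `X - μ` gives
`P(X ≥ μ + t) ≤ exp (-t²/(2v))`. Conversely, the density is decreasing on `[μ, ∞)`, so the mass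
of `[μ + t, μ + t + √v]` is at least `√v` times the density at its right end, which is
`(2π)^{-1/2} exp (-(t + √v)²/(2v))`. With `v = εσ²` and `t = M`, both bounds on `ε log P`
tend to `-M²/(2σ²)`.
-/

open Real NNReal

namespace ProbabilityTheory

variable {μ : ℝ} {v : ℝ≥0}

lemma hasSubgaussianMGF_sub_gaussianReal (μ : ℝ) (v : ℝ≥0) :
    HasSubgaussianMGF (fun x ↦ x - μ) v (gaussianReal μ v) where
  integrable_exp_mul t := by
    refine ((integrable_exp_mul_gaussianReal (μ := μ) (v := v) t).const_mul (exp (-(t * μ)))).congr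
      (ae_of_all _ fun x ↦ ?_)
    simp only [← exp_add]
    ring_nf
  mgf_le t := by
    have hmap : (gaussianReal μ v).map (fun x ↦ x - μ) = gaussianReal 0 v := by
      simpa using gaussianReal_map_sub_const (μ := μ) (v := v) μ
    rw [mgf_gaussianReal hmap]
    simp

lemma gaussianReal_real_Ici_le {t : ℝ} (ht : 0 ≤ t) :
    (gaussianReal μ v).real (Ici (μ + t)) ≤ exp (-t ^ 2 / (2 * v)) := by
  have hset : Ici (μ + t) = {x | t ≤ x - μ} := by
    ext x; simp [le_sub_iff_add_le, add_comm]
  rw [hset]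
  exact (hasSubgaussianMGF_sub_gaussianReal μ v).measure_ge_le ht

lemma gaussianPDFReal_antitoneOn : AntitoneOn (gaussianPDFReal μ v) (Ici μ) := by
  intro x (hx : μ ≤ x) y _ hxy
  rw [gaussianPDFReal, gaussianPDFReal]
  gcongr

lemma mul_gaussianPDFReal_le_gaussianReal_real_Icc {a b : ℝ} (ha : μ ≤ a) (hab : a ≤ b)
    (hv : v ≠ 0) :
    (b - a) * gaussianPDFReal μ v b ≤ (gaussianReal μ v).real (Icc a b) := by
  rw [measureReal_def, gaussianReal_apply_eq_integral μ hv, ENNReal.toReal_ofReal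
    (setIntegral_nonneg measurableSet_Icc fun x _ ↦ gaussianPDFReal_nonneg μ v x)]
  have := setIntegral_ge_of_const_le_real (s := Icc a b) (μ := volume) measurableSet_Icc
    measure_Icc_lt_top.ne
    (fun x hx ↦ gaussianPDFReal_antitoneOn (ha.trans hx.1) (ha.trans hab) hx.2)
    (integrable_gaussianPDFReal μ v).integrableOn
  simpa [hab, mul_comm] using this

lemma inv_sqrt_two_pi_mul_exp_le_gaussianReal_real_Ici {t : ℝ} (ht : 0 ≤ t) (hv : v ≠ 0) :
    (√(2 * π))⁻¹ * exp (-(t + √v) ^ 2 / (2 * v)) ≤ (gaussianReal μ v).real (Ici (μ + t)) := by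
  have hsqrt : 0 < √(v : ℝ) := by positivity
  calc (√(2 * π))⁻¹ * exp (-(t + √v) ^ 2 / (2 * v))
      = (μ + t + √v - (μ + t)) * gaussianPDFReal μ v (μ + t + √v) := by
        rw [gaussianPDFReal, sqrt_mul (by positivity : (0 : ℝ) ≤ 2 * π) v, mul_inv,
          show μ + t + √v - (μ + t) = √v by ring, show μ + t + √v - μ = t + √v by ring]
        field_simp
    _ ≤ (gaussianReal μ v).real (Icc (μ + t) (μ + t + √v)) :=
        mul_gaussianPDFReal_le_gaussianReal_real_Icc (by linarith) (by linarith) hv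
    _ ≤ (gaussianReal μ v).real (Ici (μ + t)) := measureReal_mono Icc_subset_Ici_self

lemma log_gaussianReal_real_Ici_mem_Icc {t : ℝ} (ht : 0 ≤ t) (hv : v ≠ 0) :
    log ((gaussianReal μ v).real (Ici (μ + t))) ∈
      Icc (log (√(2 * π))⁻¹ - (t + √v) ^ 2 / (2 * v)) (-t ^ 2 / (2 * v)) := by
  have hlower := inv_sqrt_two_pi_mul_exp_le_gaussianReal_real_Ici (μ := μ) ht hv
  have hpos : 0 < (gaussianReal μ v).real (Ici (μ + t)) := lt_of_lt_of_le (by positivity) hlower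
  constructor
  · calc log (√(2 * π))⁻¹ - (t + √v) ^ 2 / (2 * v)
        = log ((√(2 * π))⁻¹ * exp (-(t + √v) ^ 2 / (2 * v))) := by
          rw [log_mul (by positivity) (exp_pos _).ne', log_exp, neg_div, sub_eq_add_neg]
      _ ≤ _ := log_le_log (by positivity) hlower
  · exact (log_le_iff_le_exp hpos).2 (gaussianReal_real_Ici_le ht)

end ProbabilityTheory

lemma mul_log_gaussianReal_Ici_mem_Icc {σ M ε : ℝ} (hσ : 0 < σ) (hM : 0 ≤ M) (hε : 0 < ε) :
    ε * log ((gaussianReal 0 (ε * σ ^ 2).toNNReal (Ici M)).toReal) ∈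
      Icc (ε * log (√(2 * π))⁻¹ - (M + σ * √ε) ^ 2 / (2 * σ ^ 2)) (-(M ^ 2 / (2 * σ ^ 2))) := by
  have hv : ((ε * σ ^ 2).toNNReal : ℝ) = ε * σ ^ 2 := coe_toNNReal _ (by positivity)
  have hsqrt : √(ε * σ ^ 2) = σ * √ε := by rw [sqrt_mul hε.le, sqrt_sq hσ.le, mul_comm]
  obtain ⟨hlo, hup⟩ := log_gaussianReal_real_Ici_mem_Icc (μ := 0) hM
    (v := (ε * σ ^ 2).toNNReal) (by positivity)
  simp only [zero_add, measureReal_def, hv, hsqrt] at hlo hup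
  constructor
  · calc ε * log (√(2 * π))⁻¹ - (M + σ * √ε) ^ 2 / (2 * σ ^ 2)
        = ε * (log (√(2 * π))⁻¹ - (M + σ * √ε) ^ 2 / (2 * (ε * σ ^ 2))) := by field_simp
      _ ≤ _ := by gcongr
  · calc _ ≤ ε * (-M ^ 2 / (2 * (ε * σ ^ 2))) := by gcongr
      _ = -(M ^ 2 / (2 * σ ^ 2)) := by field_simp

/-- **Gaussian tail large deviation.** Fix `σ > 0` and `M > 0`. For `ε > 0`, let `μ_ε` be the
centered Gaussian measure on `ℝ` with variance `ε·σ²` (the law of `√ε·X` with `X ~ N(0,σ²)`).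
Then `ε · log μ_ε([M,∞)) → −M²/(2σ²)` as `ε → 0+`. -/
theorem gaussian_tail_log_limit (σ M : ℝ) (hσ : 0 < σ) (hM : 0 < M) :
    Tendsto
      (fun ε : ℝ =>
        ε * Real.log ((gaussianReal 0 (Real.toNNReal (ε * σ ^ 2)) (Set.Ici M)).toReal))
      (𝓝[>] (0 : ℝ)) (𝓝 (-(M ^ 2 / (2 * σ ^ 2)))) := by
  have hlower : Tendsto (fun ε ↦ ε * log (√(2 * π))⁻¹ - (M + σ * √ε) ^ 2 / (2 * σ ^ 2))
      (𝓝[>] 0) (𝓝 (-(M ^ 2 / (2 * σ ^ 2)))) := by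
    have hcont : Continuous fun ε ↦ ε * log (√(2 * π))⁻¹ - (M + σ * √ε) ^ 2 / (2 * σ ^ 2) := by
      fun_prop
    simpa [neg_div] using (hcont.tendsto 0).mono_left nhdsWithin_le_nhds
  exact tendsto_of_tendsto_of_tendsto_of_le_of_le' hlower tendsto_const_nhds
    (eventually_nhdsWithin_of_forall fun ε hε ↦ (mul_log_gaussianReal_Ici_mem_Icc hσ hM.le hε).1)
    (eventually_nhdsWithin_of_forall fun ε hε ↦ (mul_log_gaussianReal_Ici_mem_Icc hσ hM.le hε).2)
end

section
/- Dawson–Gärtner theorem (for sequences): let (Y_j)_{j∈ℕ} be Polish spaces and, for i ≤ j, let π_{ij} : Y_j → Y_i be continuous maps such that π_{jj} is the identity on Y_j and π_{ik} = π_{ij} ∘ π_{jk} whenever i ≤ j ≤ k. Let X := { (y_j)_{j∈ℕ} ∈ Π_j Y_j : y_i = π_{ij}(y_j) for all i ≤ j } be the projective limit, endowed with the topology induced from the product topology on Π_j Y_j, and let π_j : X → Y_j be the j-th coordinate projection. Let (μ_ε)_{ε>0} be a family of Borel probability measures on X such that for every j ∈ ℕ the pushforward family ((π_j)_*μ_ε)_{ε>0}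 on Y_j satisfies the large deviation principle with good rate function I_j : Y_j → [0,∞]. Then (μ_ε)_{ε>0} satisfies the large deviation principle on X with good rate function I((y_j)_{j∈ℕ}) := sup_{j∈ℕ} I_j(y_j). -/
/-!
The cylinder sets `π_j⁻¹ U` form a basis of the projective limit `X`. This gives the lower bound
directly, and it shows that a point all of whose coordinates lie in `closure (π_j F)` lies in the
closed set `F`. The upper bounds for `(π_j)_*μ_ε` on `closure (π_j F)` bound `μ_ε F` by the rate
`sup_j inf_{closure (π_j F)} I_j`, and this is at least `inf_F I` by compactness: for `c` strictly
between them, the sets `closure (π_j F) ∩ {I_j ≤ c}` would be nonempty, compact and mapped into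
each other by the `π_{ij}`, so they would contain the coordinates of a point of `F` with `I ≤ c`.
They are mapped into each other because `I_i ∘ π_{ij} ≤ I_j`: `(π_i)_*μ_ε` is the pushforward of
`(π_j)_*μ_ε` under `π_{ij}`, and the lower bound for `I_j` at `y` is compatible with the upper
bound for `I_i` on a closed neighbourhood of `π_{ij} y` only if `I_i (π_{ij} y) ≤ I_j y`.
-/

open MeasureTheory Filter Set Topology

/-- Large deviation lower bound for open sets. -/
def LDPLowerBound {X : Type*} [TopologicalSpace X] [MeasurableSpace X]
    (μ : ℝ → Measure X) (I : X → EReal) : Prop :=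
  ∀ O : Set X, IsOpen O →
    (-⨅ x ∈ O, I x) ≤
      Filter.liminf (fun ε : ℝ => (ε : EReal) * ENNReal.log (μ ε O)) (𝓝[>] (0 : ℝ))

/-- Large deviation upper bound for closed sets. -/
def LDPUpperBound {X : Type*} [TopologicalSpace X] [MeasurableSpace X]
    (μ : ℝ → Measure X) (I : X → EReal) : Prop :=
  ∀ F : Set X, IsClosed F →
    Filter.limsup (fun ε : ℝ => (ε : EReal) * ENNReal.log (μ ε F)) (𝓝[>] (0 : ℝ)) ≤
      -⨅ x ∈ F, I x

open scoped ENNReal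

section LargeDeviations

variable {X : Type*} [TopologicalSpace X] [MeasurableSpace X]

theorem eventually_mul_log_le_mul_log {f g : ℝ → ℝ≥0∞} (hfg : ∀ ε, 0 < ε → f ε ≤ g ε) :
    ∀ᶠ ε : ℝ in 𝓝[>] 0, (ε : EReal) * ENNReal.log (f ε) ≤ (ε : EReal) * ENNReal.log (g ε) := by
  filter_upwards [self_mem_nhdsWithin] with ε (hε : 0 < ε)
  exact mul_le_mul_of_nonneg_left (ENNReal.log_monotone (hfg ε hε)) (by exact_mod_cast hε.le)

theorem LDPLowerBound.comp_le_of_ldpUpperBound_map {Z : Type*} [TopologicalSpace Z]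
    [RegularSpace Z] [MeasurableSpace Z] [OpensMeasurableSpace Z] {μ : ℝ → Measure X}
    {J : X → EReal} {I : Z → EReal} {f : X → Z} (hf : Continuous f) (hfm : Measurable f)
    (hJ : LDPLowerBound μ J) (hI : LDPUpperBound (fun ε => (μ ε).map f) I)
    (hIlsc : LowerSemicontinuous I) : I ∘ f ≤ J := by
  intro x
  by_contra! hlt
  obtain ⟨a, hJa, haI⟩ := exists_between hlt
  obtain ⟨C, ⟨hC, hCclosed⟩, hCa⟩ :=
    (closed_nhds_basis (f x)).eventually_iff.mp (hIlsc (f x) a haI)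
  have hlow : -J x ≤
      liminf (fun ε : ℝ => (ε : EReal) * ENNReal.log (μ ε (f ⁻¹' C))) (𝓝[>] 0) := by
    have hx : x ∈ f ⁻¹' interior C := mem_interior_iff_mem_nhds.mpr hC
    refine (EReal.neg_le_neg_iff.mpr (iInf₂_le x hx)).trans
      ((hJ _ (isOpen_interior.preimage hf)).trans (liminf_le_liminf ?_))
    exact eventually_mul_log_le_mul_log fun ε _ => measure_mono (preimage_mono interior_subset)
  have hup : limsup (fun ε : ℝ => (ε : EReal) * ENNReal.log (μ ε (f ⁻¹' C))) (𝓝[>] 0) ≤ -a := by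
    simpa only [Measure.map_apply hfm hCclosed.measurableSet] using
      (hI C hCclosed).trans (EReal.neg_le_neg_iff.mpr (le_iInf₂ fun z hz => (hCa hz).le))
  exact (EReal.neg_le_neg_iff.mp (hlow.trans (le_trans liminf_le_limsup hup))).not_gt hJa

variable {ι : Type*} {Y : ι → Type*} [∀ j, TopologicalSpace (Y j)] [∀ j, MeasurableSpace (Y j)]
  [∀ j, OpensMeasurableSpace (Y j)] {μ : ℝ → Measure X} {p : ∀ j, X → Y j}
  {I : ∀ j, Y j → EReal}

theorem ldpLowerBound_iSup_of_isOpen_preimage (hp : ∀ j, Measurable (p j))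
    (hbasis : ∀ O, IsOpen O → ∀ x ∈ O, ∃ j, ∃ U, IsOpen U ∧ p j x ∈ U ∧ p j ⁻¹' U ⊆ O)
    (h : ∀ j, LDPLowerBound (fun ε => (μ ε).map (p j)) (I j)) :
    LDPLowerBound μ fun x => ⨆ j, I j (p j x) := by
  intro O hO
  refine EReal.neg_le.mpr (le_iInf₂ fun x hx => EReal.neg_le.mp ?_)
  obtain ⟨j, U, hU, hxU, hUO⟩ := hbasis O hO x hx
  calc -⨆ j, I j (p j x) ≤ -⨅ y ∈ U, I j y :=
        EReal.neg_le_neg_iff.mpr ((iInf₂_le _ hxU).trans (le_iSup (fun j => I j (p j x)) j))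
    _ ≤ _ := h j U hU
    _ ≤ _ := liminf_le_liminf <| eventually_mul_log_le_mul_log fun ε _ => by
        simpa only [Measure.map_apply (hp j) hU.measurableSet] using measure_mono hUO

theorem ldpUpperBound_of_iInf_le_iSup_iInf_closure_image (hp : ∀ j, Measurable (p j))
    (h : ∀ j, LDPUpperBound (fun ε => (μ ε).map (p j)) (I j)) {J : X → EReal}
    (hJ : ∀ F, IsClosed F → ⨅ x ∈ F, J x ≤ ⨆ j, ⨅ y ∈ closure (p j '' F), I j y) :
    LDPUpperBound μ J := by
  intro F hF
  calc _ ≤ ⨅ j, -⨅ y ∈ closure (p j '' F), I j y := le_iInf fun j =>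
        (limsup_le_limsup <| eventually_mul_log_le_mul_log fun ε _ => by
          simpa only [Measure.map_apply (hp j) isClosed_closure.measurableSet] using
            measure_mono (subset_preimage_image (p j) F |>.trans (preimage_mono subset_closure))
          ).trans (h j _ isClosed_closure)
    _ = -⨆ j, ⨅ y ∈ closure (p j '' F), I j y := (EReal.negOrderIso.map_iSup _).symm
    _ ≤ -⨅ x ∈ F, J x := EReal.neg_le_neg_iff.mpr (hJ F hF)

end LargeDeviations

section ProjectiveLimit

variable {Y : ℕ → Type*}

def projectiveLimit (π : ∀ i j : ℕ, i ≤ j → Y j → Y i) : Set (∀ j, Y j) :=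
  {y | ∀ i j (h : i ≤ j), y i = π i j h (y j)}

variable {π : ∀ i j : ℕ, i ≤ j → Y j → Y i}

theorem map_map_eval_projectiveLimit [MeasurableSpace (projectiveLimit π)]
    [∀ j, MeasurableSpace (Y j)] (ν : Measure (projectiveLimit π)) {i j : ℕ} (h : i ≤ j)
    (hπ : Measurable (π i j h)) (hp : Measurable fun x : projectiveLimit π => x.1 j) :
    (ν.map fun x => x.1 j).map (π i j h) = ν.map fun x => x.1 i := by
  rw [Measure.map_map hπ hp]
  exact congrArg ν.map (funext fun x => (x.2 i j h).symm)

variable [∀ j, TopologicalSpace (Y j)]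

theorem isClosed_setOf_eq_proj [∀ j, T2Space (Y j)] (hπ : ∀ i j h, Continuous (π i j h))
    (i j : ℕ) (h : i ≤ j) :
    IsClosed {y : ∀ k, Y k | y i = π i j h (y j)} :=
  isClosed_eq (continuous_apply i) ((hπ i j h).comp (continuous_apply j))

theorem isClosed_projectiveLimit [∀ j, T2Space (Y j)] (hπ : ∀ i j h, Continuous (π i j h)) :
    IsClosed (projectiveLimit π) := by
  simp only [projectiveLimit, ofPred_forall]
  exact isClosed_iInter fun i => isClosed_iInter fun j => isClosed_iInter fun h =>
    isClosed_setOf_eq_proj hπ i j h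

theorem exists_isOpen_preimage_subset_of_isOpen (hπ : ∀ i j h, Continuous (π i j h))
    {O : Set (projectiveLimit π)} (hO : IsOpen O) {x : projectiveLimit π} (hx : x ∈ O) :
    ∃ j, ∃ U : Set (Y j), IsOpen U ∧ x.1 j ∈ U ∧
      (fun z : projectiveLimit π => z.1 j) ⁻¹' U ⊆ O := by
  obtain ⟨O', hO', rfl⟩ := isOpen_induced_iff.mp hO
  obtain ⟨s, u, hu, hsub⟩ := isOpen_pi_iff.mp hO' x.1 hx
  have hle : ∀ i ∈ s, i ≤ s.sup id := fun i hi => Finset.le_sup (f := id) hi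
  refine ⟨s.sup id, ⋂ i : s, π i _ (hle i i.2) ⁻¹' u i, ?_, ?_, ?_⟩
  · exact isOpen_iInter_of_finite fun i => (hu i i.2).1.preimage (hπ _ _ _)
  · exact mem_iInter.mpr fun i => mem_preimage.mpr (x.2 i _ (hle i i.2) ▸ (hu i i.2).2)
  · intro z hz
    refine hsub fun i hi => ?_
    rw [z.2 i _ (hle i hi)]
    exact mem_iInter.mp hz ⟨i, hi⟩

theorem mem_closure_of_forall_mem_closure_image (hπ : ∀ i j h, Continuous (π i j h))
    {F : Set (projectiveLimit π)} {x : projectiveLimit π}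
    (hx : ∀ j, x.1 j ∈ closure ((fun z : projectiveLimit π => z.1 j) '' F)) :
    x ∈ closure F := by
  refine mem_closure_iff.mpr fun O hO hxO => ?_
  obtain ⟨j, U, hU, hxU, hUO⟩ := exists_isOpen_preimage_subset_of_isOpen hπ hO hxO
  obtain ⟨_, hzU, z, hzF, rfl⟩ := mem_closure_iff.mp (hx j) U hU hxU
  exact ⟨z, hUO hzU, hzF⟩

theorem exists_mem_projectiveLimit_forall_mem [∀ j, T2Space (Y j)]
    (hπ : ∀ i j h, Continuous (π i j h)) (hπcomp : ∀ i j k (hij : i ≤ j) (hjk : j ≤ k) (y : Y k),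
      π i k (hij.trans hjk) y = π i j hij (π j k hjk y)) {A : ∀ j, Set (Y j)}
    (hAne : ∀ j, (A j).Nonempty) (hA : ∀ j, IsCompact (A j))
    (hmaps : ∀ i j (h : i ≤ j), MapsTo (π i j h) (A j) (A i)) :
    ∃ x ∈ projectiveLimit π, ∀ j, x j ∈ A j := by
  set T : ℕ → Set (∀ j, Y j) := fun n => univ.pi A ∩ {y | ∀ i (h : i ≤ n), y i = π i n h (y n)}
  have hT_anti : ∀ n, T (n + 1) ⊆ T n := fun n y ⟨hyA, hy⟩ => ⟨hyA, fun i h => by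
    rw [hy i (h.trans n.le_succ), hπcomp i n (n + 1) h n.le_succ, ← hy n n.le_succ]⟩
  have hT_closed : ∀ n, IsClosed (T n) := fun n => by
    refine (isClosed_set_pi fun j _ => (hA j).isClosed).inter ?_
    simp only [ofPred_forall]
    exact isClosed_iInter fun i => isClosed_iInter fun h => isClosed_setOf_eq_proj hπ i n h
  have hT_ne : ∀ n, (T n).Nonempty := by
    intro n
    obtain ⟨a, ha⟩ := hAne n
    classical
    refine ⟨fun j => if h : j ≤ n then π j n h a else (hAne j).some, fun j _ => ?_, fun i h => ?_⟩
    · by_cases h : j ≤ n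
      · simpa only [dif_pos h] using hmaps j n h ha
      · simpa only [dif_neg h] using (hAne j).some_mem
    · simpa only [dif_pos h, dif_pos le_rfl] using hπcomp i n n h le_rfl a
  obtain ⟨x, hx⟩ := IsCompact.nonempty_iInter_of_sequence_nonempty_isCompact_isClosed T hT_anti
    hT_ne ((isCompact_univ_pi hA).of_isClosed_subset (hT_closed 0) inter_subset_left) hT_closed
  rw [mem_iInter] at hx
  exact ⟨x, fun i j h => (hx j).2 i h, fun j => (hx 0).1 j (mem_univ j)⟩

theorem isCompact_setOf_iSup_le [∀ j, T2Space (Y j)] (hπ : ∀ i j h, Continuous (π i j h))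
    {I : ∀ j, Y j → EReal} {c : EReal} (hc : ∀ j, IsCompact {y | I j y ≤ c}) :
    IsCompact {x : projectiveLimit π | ⨆ j, I j (x.1 j) ≤ c} := by
  have hpre : {x : projectiveLimit π | ⨆ j, I j (x.1 j) ≤ c} =
      Subtype.val ⁻¹' univ.pi fun j => {y | I j y ≤ c} := by
    ext x
    simp only [mem_ofPred_eq, iSup_le_iff, mem_preimage, mem_univ_pi]
  rw [hpre]
  exact (isClosed_projectiveLimit hπ).isClosedEmbedding_subtypeVal.isCompact_preimage
    (isCompact_univ_pi hc)

theorem iInf_iSup_le_iSup_iInf_closure_image [∀ j, T2Space (Y j)]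
    (hπ : ∀ i j h, Continuous (π i j h)) (hπcomp : ∀ i j k (hij : i ≤ j) (hjk : j ≤ k) (y : Y k),
      π i k (hij.trans hjk) y = π i j hij (π j k hjk y))
    {I : ∀ j, Y j → EReal} (hI0 : ∀ j y, 0 ≤ I j y)
    (hI : ∀ (j : ℕ) (c : ℝ), 0 ≤ c → IsCompact {y | I j y ≤ c})
    (hIπ : ∀ i j (h : i ≤ j) y, I i (π i j h y) ≤ I j y)
    {F : Set (projectiveLimit π)} (hF : IsClosed F) :
    ⨅ x ∈ F, ⨆ j, I j (x.1 j) ≤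
      ⨆ j, ⨅ y ∈ closure ((fun x : projectiveLimit π => x.1 j) '' F), I j y := by
  by_contra! hlt
  obtain ⟨c, hRc, hcF⟩ := EReal.exists_between_coe_real hlt
  have hc : (0 : ℝ) ≤ c := by
    exact_mod_cast ((le_iSup_of_le 0 (le_iInf₂ fun y _ => hI0 0 y)).trans_lt hRc).le
  set A : ∀ j, Set (Y j) := fun j =>
    closure ((fun x : projectiveLimit π => x.1 j) '' F) ∩ {y | I j y ≤ c}
  have hA : ∀ j, (A j).Nonempty := fun j => by
    have hlt : ⨅ y ∈ closure ((fun x : projectiveLimit π => x.1 j) '' F), I j y < c :=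
      (le_iSup _ j).trans_lt hRc
    obtain ⟨y, hy, hyc⟩ := by simpa only [iInf_lt_iff, exists_prop] using hlt
    exact ⟨y, hy, hyc.le⟩
  have hmaps : ∀ i j (h : i ≤ j), MapsTo (π i j h) (A j) (A i) := by
    refine fun i j h y hy => ⟨MapsTo.closure ?_ (hπ i j h) hy.1, (hIπ i j h y).trans hy.2⟩
    rintro _ ⟨x, hx, rfl⟩
    exact ⟨x, hx, x.2 i j h⟩
  obtain ⟨x, hxX, hxA⟩ := exists_mem_projectiveLimit_forall_mem hπ hπcomp hA
    (fun j => (hI j c hc).inter_left isClosed_closure) hmaps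
  have hxF : ⟨x, hxX⟩ ∈ F :=
    hF.closure_subset (mem_closure_of_forall_mem_closure_image hπ fun j => (hxA j).1)
  exact hcF.not_ge ((iInf₂_le _ hxF).trans (iSup_le fun j => (hxA j).2))

end ProjectiveLimit

theorem dawson_gartner_general
    (Y : ℕ → Type*) [∀ j, TopologicalSpace (Y j)] [∀ j, PolishSpace (Y j)]
    [∀ j, MeasurableSpace (Y j)] [∀ j, BorelSpace (Y j)]
    (π : ∀ i j : ℕ, i ≤ j → Y j → Y i)
    (hπcont : ∀ (i j : ℕ) (h : i ≤ j), Continuous (π i j h))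
    (hπcomp : ∀ (i j k : ℕ) (hij : i ≤ j) (hjk : j ≤ k) (y : Y k),
      π i k (hij.trans hjk) y = π i j hij (π j k hjk y))
    (X : Set (∀ j, Y j))
    (hX : X = {y : ∀ j, Y j | ∀ (i j : ℕ) (h : i ≤ j), y i = π i j h (y j)})
    [MeasurableSpace X] [BorelSpace X]
    (μ : ℝ → Measure X)
    (I : ∀ j, Y j → EReal) (hInonneg : ∀ j y, 0 ≤ I j y)
    (hIlsc : ∀ j, LowerSemicontinuous (I j))
    (hIgood : ∀ (j : ℕ) (c : ℝ), 0 ≤ c → IsCompact {y : Y j | I j y ≤ (c : EReal)})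
    (hlower : ∀ j, LDPLowerBound
      (fun ε => Measure.map (fun x : X => (x : ∀ j, Y j) j) (μ ε)) (I j))
    (hupper : ∀ j, LDPUpperBound
      (fun ε => Measure.map (fun x : X => (x : ∀ j, Y j) j) (μ ε)) (I j)) :
    LowerSemicontinuous (fun x : X => ⨆ j, I j ((x : ∀ j, Y j) j)) ∧
    (∀ c : ℝ, 0 ≤ c →
      IsCompact {x : X | (⨆ j, I j ((x : ∀ j, Y j) j)) ≤ (c : EReal)}) ∧
    LDPLowerBound μ (fun x : X => ⨆ j, I j ((x : ∀ j, Y j) j)) ∧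
    LDPUpperBound μ (fun x : X => ⨆ j, I j ((x : ∀ j, Y j) j)) := by
  obtain rfl : X = projectiveLimit π := hX
  have hp : ∀ j, Continuous fun x : projectiveLimit π => x.1 j :=
    fun j => (continuous_apply j).comp continuous_subtype_val
  have hmap : ∀ i j (h : i ≤ j) ε,
      ((μ ε).map fun x => x.1 j).map (π i j h) = (μ ε).map fun x => x.1 i :=
    fun i j h ε => map_map_eval_projectiveLimit _ h (hπcont i j h).measurable (hp j).measurable
  have hIπ : ∀ i j (h : i ≤ j) y, I i (π i j h y) ≤ I j y := fun i j h =>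
    (hlower j).comp_le_of_ldpUpperBound_map (hπcont i j h) (hπcont i j h).measurable
      (by simpa only [hmap] using hupper i) (hIlsc i)
  refine ⟨lowerSemicontinuous_iSup fun j => (hIlsc j).comp (hp j),
    fun c hc => isCompact_setOf_iSup_le hπcont fun j => hIgood j c hc,
    ldpLowerBound_iSup_of_isOpen_preimage (fun j => (hp j).measurable)
      (fun O hO x hx => exists_isOpen_preimage_subset_of_isOpen hπcont hO hx) hlower,
    ldpUpperBound_of_iInf_le_iSup_iInf_closure_image (fun j => (hp j).measurable) hupper
      fun F hF => iInf_iSup_le_iSup_iInf_closure_image hπcont hπcomp hInonneg hIgood hIπ hF⟩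

/-- **Dawson–Gärtner theorem** (for projective systems indexed by `ℕ`).
Let `(Y_j)` be Polish spaces with continuous maps `π_{ij} : Y_j → Y_i` for `i ≤ j`
such that `π_{jj} = id` and `π_{ik} = π_{ij} ∘ π_{jk}` for `i ≤ j ≤ k`.
Let `X` be the projective limit, a subspace of `Π_j Y_j` with the product topology, and
`π_j : X → Y_j` the coordinate projections. If `(μ_ε)_{ε>0}` are Borel probability
measures on `X` such that for each `j` the pushforwards `((π_j)_*μ_ε)_{ε>0}` satisfy the
LDP with good rate function `I_j`, then `(μ_ε)_{ε>0}` satisfies the LDP on `X` with good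
rate function `I(y) = sup_j I_j(y_j)`. -/
theorem dawson_gartner
    (Y : ℕ → Type*) [∀ j, TopologicalSpace (Y j)] [∀ j, PolishSpace (Y j)]
    [∀ j, MeasurableSpace (Y j)] [∀ j, BorelSpace (Y j)]
    (π : ∀ i j : ℕ, i ≤ j → Y j → Y i)
    (hπcont : ∀ (i j : ℕ) (h : i ≤ j), Continuous (π i j h))
    (hπid : ∀ (j : ℕ) (y : Y j), π j j le_rfl y = y)
    (hπcomp : ∀ (i j k : ℕ) (hij : i ≤ j) (hjk : j ≤ k) (y : Y k),
      π i k (hij.trans hjk) y = π i j hij (π j k hjk y))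
    (X : Set (∀ j, Y j))
    (hX : X = {y : ∀ j, Y j | ∀ (i j : ℕ) (h : i ≤ j), y i = π i j h (y j)})
    [MeasurableSpace X] [BorelSpace X]
    (μ : ℝ → Measure X) (hprob : ∀ ε : ℝ, 0 < ε → IsProbabilityMeasure (μ ε))
    (I : ∀ j, Y j → EReal) (hInonneg : ∀ j y, 0 ≤ I j y)
    (hIlsc : ∀ j, LowerSemicontinuous (I j))
    (hIgood : ∀ (j : ℕ) (c : ℝ), 0 ≤ c → IsCompact {y : Y j | I j y ≤ (c : EReal)})
    (hlower : ∀ j, LDPLowerBound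
      (fun ε => Measure.map (fun x : X => (x : ∀ j, Y j) j) (μ ε)) (I j))
    (hupper : ∀ j, LDPUpperBound
      (fun ε => Measure.map (fun x : X => (x : ∀ j, Y j) j) (μ ε)) (I j)) :
    LowerSemicontinuous (fun x : X => ⨆ j, I j ((x : ∀ j, Y j) j)) ∧
    (∀ c : ℝ, 0 ≤ c →
      IsCompact {x : X | (⨆ j, I j ((x : ∀ j, Y j) j)) ≤ (c : EReal)}) ∧
    LDPLowerBound μ (fun x : X => ⨆ j, I j ((x : ∀ j, Y j) j)) ∧
    LDPUpperBound μ (fun x : X => ⨆ j, I j ((x : ∀ j, Y j) j)) :=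
  dawson_gartner_general Y π hπcont hπcomp X hX μ I hInonneg hIlsc hIgood hlower hupper
end

section
/- Partition formula for the Dirichlet energy: let T > 0 and let f : ℝ → ℝ be measurable with ∫₀^T f(s)² ds < ∞. Define W(t) := ∫₀^t f(s) ds for t ∈ [0,T]. Then the supremum, over all k ∈ ℕ and all partitions 0 = t₀ < t₁ < ⋯ < t_k ≤ T, of Σ_{i=0}^{k−1} (W(t_{i+1}) − W(t_i))²/(2(t_{i+1} − t_i)) equals (1/2)∫₀^T f(s)² ds. -/
/-!
For `a < b` and any constant `c`, completing the square gives
`(∫_a^b f)² / (b - a) = ∫_a^b f² - ∫_a^b (f - c)² + (b - a) (c - mean f)²`.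
With `c` the mean this is Cauchy–Schwarz, so every partition sum is at most
`½ ∫_0^T f²` after telescoping. Conversely, approximate `f` in `L²(0, T)` by a continuous `g`
and take a uniform partition so fine that `g` oscillates by at most `η` on each piece; choosing
`c = g(tᵢ)` on `[tᵢ, tᵢ₊₁]`, the defect `Σ ∫ (f - c)²` is at most `2 ‖f - g‖² + 2 η² T`.
-/

open MeasureTheory Set intervalIntegral BoundedContinuousFunction

theorem Fin.sum_succ_sub_castSucc {M : Type*} [AddCommGroup M] {n : ℕ} (f : Fin (n + 1) → M) :
    ∑ i : Fin n, (f i.succ - f i.castSucc) = f (Fin.last n) - f 0 := by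
  induction n with
  | zero => simp
  | succ n ih =>
    rw [Fin.sum_univ_castSucc]
    simp only [Fin.succ_castSucc]
    rw [ih (fun i => f i.castSucc), Fin.castSucc_zero, Fin.succ_last]
    abel

section FiniteMeasure

variable {α : Type*} [MeasurableSpace α] {μ : Measure α} {f : α → ℝ}

theorem MeasureTheory.MemLp.exists_boundedContinuous_integral_sub_sq_le [TopologicalSpace α]
    [NormalSpace α] [BorelSpace α] [μ.WeaklyRegular] (hf : MemLp f 2 μ) {ε : ℝ} (hε : 0 < ε) :
    ∃ g : α →ᵇ ℝ, MemLp g 2 μ ∧ ∫ x, (f x - g x) ^ 2 ∂μ ≤ ε := by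
  rw [← ENNReal.ofReal_ofNat] at hf
  obtain ⟨g, hfg, hg⟩ := hf.exists_boundedContinuous_integral_rpow_sub_le two_pos hε
  rw [ENNReal.ofReal_ofNat] at hg
  refine ⟨g, hg, ?_⟩
  simpa only [Real.norm_eq_abs, Real.rpow_two, sq_abs] using hfg

variable [IsFiniteMeasure μ]

theorem integral_sub_const_sq (hf : MemLp f 2 μ) (c : ℝ) :
    ∫ x, (f x - c) ^ 2 ∂μ = ∫ x, f x ^ 2 ∂μ - 2 * c * ∫ x, f x ∂μ + c ^ 2 * μ.real univ := by
  have hf1 : Integrable f μ := hf.integrable one_le_two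
  have hexp : ∀ x, (f x - c) ^ 2 = f x ^ 2 - 2 * c * f x + c ^ 2 := fun x => by ring
  have hlin : Integrable (fun x => f x ^ 2 - 2 * c * f x) μ :=
    hf.integrable_sq.sub (hf1.const_mul _)
  simp_rw [hexp]
  rw [integral_add hlin (integrable_const _),
    integral_sub hf.integrable_sq (hf1.const_mul _), MeasureTheory.integral_const_mul,
    MeasureTheory.integral_const, smul_eq_mul, mul_comm (μ.real univ)]

theorem sq_integral_div_le_integral_sq (hf : MemLp f 2 μ) :
    (∫ x, f x ∂μ) ^ 2 / μ.real univ ≤ ∫ x, f x ^ 2 ∂μ := by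
  rcases (measureReal_nonneg : 0 ≤ μ.real univ).eq_or_lt with hμ | hμ
  · rw [← hμ, div_zero]
    exact integral_nonneg fun x => sq_nonneg _
  set m := μ.real univ
  set I := ∫ x, f x ∂μ
  have hvar : 0 ≤ ∫ x, f x ^ 2 ∂μ - 2 * (I / m) * I + (I / m) ^ 2 * m :=
    integral_sub_const_sq hf (I / m) ▸ integral_nonneg fun x => sq_nonneg _
  have hmean : 2 * (I / m) * I - (I / m) ^ 2 * m = I ^ 2 / m := by field_simp; ring
  linarith

theorem integral_sq_sub_integral_sub_const_sq_le (hf : MemLp f 2 μ) (c : ℝ) :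
    ∫ x, f x ^ 2 ∂μ - ∫ x, (f x - c) ^ 2 ∂μ ≤ (∫ x, f x ∂μ) ^ 2 / μ.real univ := by
  rw [integral_sub_const_sq hf]
  rcases (measureReal_nonneg : 0 ≤ μ.real univ).eq_or_lt with hμ | hμ
  · have : μ = 0 := by simpa [measureReal_def, ENNReal.toReal_eq_zero_iff] using hμ.symm
    simp [this]
  rw [le_div_iff₀ hμ]
  nlinarith [sq_nonneg (∫ x, f x ∂μ - c * μ.real univ)]

end FiniteMeasure

namespace intervalIntegral

variable {f : ℝ → ℝ} {a b : ℝ}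

theorem sq_integral_div_le_integral_sq (hab : a ≤ b)
    (hf : MemLp f 2 (volume.restrict (Ioc a b))) :
    (∫ x in a..b, f x) ^ 2 / (b - a) ≤ ∫ x in a..b, f x ^ 2 := by
  simpa only [integral_of_le hab, measureReal_restrict_apply_univ, Real.volume_real_Ioc_of_le hab]
    using _root_.sq_integral_div_le_integral_sq hf

theorem integral_sq_sub_integral_sub_const_sq_le (hab : a ≤ b)
    (hf : MemLp f 2 (volume.restrict (Ioc a b))) (c : ℝ) :
    (∫ x in a..b, f x ^ 2) - ∫ x in a..b, (f x - c) ^ 2 ≤ (∫ x in a..b, f x) ^ 2 / (b - a) := by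
  simpa only [integral_of_le hab, measureReal_restrict_apply_univ, Real.volume_real_Ioc_of_le hab]
    using _root_.integral_sq_sub_integral_sub_const_sq_le hf c

theorem integral_sub_const_sq_le (hab : a ≤ b) {g : ℝ → ℝ} {c η : ℝ}
    (hfg : IntervalIntegrable (fun x => (f x - g x) ^ 2) volume a b)
    (hfc : IntervalIntegrable (fun x => (f x - c) ^ 2) volume a b)
    (hgc : ∀ x ∈ Icc a b, |g x - c| ≤ η) :
    ∫ x in a..b, (f x - c) ^ 2 ≤ 2 * (∫ x in a..b, (f x - g x) ^ 2) + 2 * η ^ 2 * (b - a) := by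
  have hbound : ∀ x ∈ Icc a b, (f x - c) ^ 2 ≤ 2 * (f x - g x) ^ 2 + 2 * η ^ 2 := fun x hx => by
    have hsq : (g x - c) ^ 2 ≤ η ^ 2 := sq_le_sq' (abs_le.1 (hgc x hx)).1 (abs_le.1 (hgc x hx)).2
    nlinarith [sq_nonneg (f x - 2 * g x + c)]
  calc ∫ x in a..b, (f x - c) ^ 2
      ≤ ∫ x in a..b, (2 * (f x - g x) ^ 2 + 2 * η ^ 2) :=
        integral_mono_on hab hfc ((hfg.const_mul 2).add intervalIntegrable_const) hbound
    _ = 2 * (∫ x in a..b, (f x - g x) ^ 2) + 2 * η ^ 2 * (b - a) := by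
        rw [integral_add (hfg.const_mul 2) intervalIntegrable_const, integral_const_mul,
          integral_const, smul_eq_mul, mul_comm (b - a)]

section Partition

variable {E : Type*} [NormedAddCommGroup E] {μ : Measure ℝ} {g : ℝ → E} {k : ℕ}

theorem _root_.IntervalIntegrable.trans_iterate_fin {t : Fin (k + 1) → ℝ}
    (hg : ∀ i : Fin k, IntervalIntegrable g μ (t i.castSucc) (t i.succ)) :
    IntervalIntegrable g μ (t 0) (t (Fin.last k)) := by
  induction k with
  | zero => exact IntervalIntegrable.refl
  | succ k ih =>
    have hinit := ih (t := fun i => t i.castSucc) fun i => by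
      simpa only [Fin.succ_castSucc] using hg i.castSucc
    simpa only [Fin.castSucc_zero, Fin.succ_last] using hinit.trans (hg (Fin.last k))

theorem sum_integral_adjacent_intervals_fin [NormedSpace ℝ E] (t : Fin (k + 1) → ℝ)
    (hg : ∀ i : Fin k, IntervalIntegrable g μ (t i.castSucc) (t i.succ)) :
    ∑ i : Fin k, ∫ x in t i.castSucc..t i.succ, g x ∂μ = ∫ x in t 0..t (Fin.last k), g x ∂μ := by
  induction k with
  | zero => simp
  | succ k ih =>
    have hinit (i : Fin k) :
        IntervalIntegrable g μ (t i.castSucc.castSucc) (t i.succ.castSucc) := by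
      simpa only [Fin.succ_castSucc] using hg i.castSucc
    rw [Fin.sum_univ_castSucc]
    simp only [Fin.succ_castSucc]
    have hfirst : IntervalIntegrable g μ (t 0) (t (Fin.last k).castSucc) :=
      IntervalIntegrable.trans_iterate_fin (t := fun i => t i.castSucc) hinit
    rw [ih (fun i => t i.castSucc) hinit, Fin.castSucc_zero,
      integral_add_adjacent_intervals hfirst (hg (Fin.last k)), Fin.succ_last]

end Partition

end intervalIntegral

theorem Monotone.mem_Icc_of_le_zero_of_last_le {a b : ℝ} {k : ℕ} {t : Fin (k + 1) → ℝ}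
    (ht : Monotone t) (ha : a ≤ t 0) (hb : t (Fin.last k) ≤ b) (i : Fin (k + 1)) :
    t i ∈ Icc a b :=
  ⟨ha.trans (ht (Fin.zero_le i)), (ht (Fin.le_last i)).trans hb⟩

theorem MeasureTheory.MemLp.restrict_Ioc_of_mem_Icc {f : ℝ → ℝ} {a b x y : ℝ}
    (hf : MemLp f 2 (volume.restrict (Icc a b))) (hx : x ∈ Icc a b) (hy : y ∈ Icc a b) :
    MemLp f 2 (volume.restrict (Ioc x y)) :=
  hf.mono_measure (Measure.restrict_mono (Ioc_subset_Icc_self.trans (Icc_subset_Icc hx.1 hy.2))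
    le_rfl)

theorem MeasureTheory.IntegrableOn.intervalIntegrable_of_mem_Icc {E : Type*}
    [NormedAddCommGroup E] {g : ℝ → E} {a b x y : ℝ} (hg : IntegrableOn g (Icc a b))
    (hx : x ∈ Icc a b) (hy : y ∈ Icc a b) : IntervalIntegrable g volume x y :=
  (hg.mono_set (uIcc_subset_Icc hx hy)).intervalIntegrable

noncomputable def partitionEnergy (W : ℝ → ℝ) {k : ℕ} (t : Fin (k + 1) → ℝ) : ℝ :=
  ∑ i : Fin k, (W (t i.succ) - W (t i.castSucc)) ^ 2 / (2 * (t i.succ - t i.castSucc))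

section PartitionEnergy

variable {f : ℝ → ℝ} {a b : ℝ} {k : ℕ} {t : Fin (k + 1) → ℝ}

theorem partitionEnergy_primitive (hf : IntegrableOn f (Icc a b)) (ht : ∀ i, t i ∈ Icc a b) :
    partitionEnergy (fun x => ∫ s in a..x, f s) t =
      ∑ i : Fin k, (∫ s in t i.castSucc..t i.succ, f s) ^ 2 / (2 * (t i.succ - t i.castSucc)) := by
  have ha : a ∈ Icc a b := ⟨le_rfl, (ht 0).1.trans (ht 0).2⟩
  refine Finset.sum_congr rfl fun i _ => ?_
  rw [integral_interval_sub_left (hf.intervalIntegrable_of_mem_Icc ha (ht _))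
    (hf.intervalIntegrable_of_mem_Icc ha (ht _))]

theorem partitionEnergy_le (hf : MemLp f 2 (volume.restrict (Icc a b))) (ht : Monotone t)
    (ha : a ≤ t 0) (hb : t (Fin.last k) ≤ b) :
    partitionEnergy (fun x => ∫ s in a..x, f s) t ≤ (1 / 2) * ∫ x in a..b, f x ^ 2 := by
  have hmem := ht.mem_Icc_of_le_zero_of_last_le ha hb
  have hab : a ≤ b := (hmem 0).1.trans (hmem 0).2
  have hstep (i : Fin k) : t i.castSucc ≤ t i.succ := ht Fin.castSucc_lt_succ.le
  have hsq : IntegrableOn (fun x => f x ^ 2) (Icc a b) := hf.integrable_sq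
  calc partitionEnergy (fun x => ∫ s in a..x, f s) t
      = ∑ i : Fin k, (∫ s in t i.castSucc..t i.succ, f s) ^ 2 / (2 * (t i.succ - t i.castSucc)) :=
        partitionEnergy_primitive (hf.integrable one_le_two) hmem
    _ ≤ ∑ i : Fin k, (1 / 2) * ∫ x in t i.castSucc..t i.succ, f x ^ 2 := by
        refine Finset.sum_le_sum fun i _ => ?_
        rw [← div_div, div_right_comm, one_div_mul_eq_div]
        gcongr
        exact sq_integral_div_le_integral_sq (hstep i)
          (hf.restrict_Ioc_of_mem_Icc (hmem _) (hmem _))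
    _ = (1 / 2) * ∫ x in t 0..t (Fin.last k), f x ^ 2 := by
        rw [← Finset.mul_sum, sum_integral_adjacent_intervals_fin t fun i =>
          hsq.intervalIntegrable_of_mem_Icc (hmem _) (hmem _)]
    _ ≤ (1 / 2) * ∫ x in a..b, f x ^ 2 := by
        gcongr
        exact integral_mono_interval ha (ht (Fin.zero_le _)) hb (ae_of_all _ fun x => sq_nonneg _)
          (hsq.intervalIntegrable_of_mem_Icc (left_mem_Icc.2 hab) (right_mem_Icc.2 hab))

end PartitionEnergy

noncomputable def uniformPartition (a b : ℝ) (k : ℕ) (i : Fin (k + 1)) : ℝ :=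
  a + i * ((b - a) / k)

section UniformPartition

variable {a b : ℝ} {k : ℕ}

@[simp]
theorem uniformPartition_zero : uniformPartition a b k 0 = a := by
  simp [uniformPartition]

theorem uniformPartition_last (hk : k ≠ 0) : uniformPartition a b k (Fin.last k) = b := by
  have hk' : (k : ℝ) ≠ 0 := Nat.cast_ne_zero.2 hk
  simp only [uniformPartition, Fin.val_last]
  field_simp
  ring

theorem uniformPartition_succ_sub_castSucc (i : Fin k) :
    uniformPartition a b k i.succ - uniformPartition a b k i.castSucc = (b - a) / k := by
  simp only [uniformPartition, Fin.val_succ, Fin.val_castSucc, Nat.cast_succ]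
  ring

theorem strictMono_uniformPartition (hab : a < b) : StrictMono (uniformPartition a b k) := by
  intro i j hij
  have hk : (0 : ℝ) < k := by
    have : (i : ℕ) < j := hij
    exact_mod_cast (show 0 < k by omega)
  have hmesh : 0 < (b - a) / k := div_pos (sub_pos.2 hab) hk
  simp only [uniformPartition]
  gcongr
  exact_mod_cast hij

end UniformPartition

section LowerBound

variable {f : ℝ → ℝ} {a b : ℝ} {k : ℕ} {t : Fin (k + 1) → ℝ}

theorem le_partitionEnergy (hf : MemLp f 2 (volume.restrict (Icc a b))) (ht : Monotone t)
    (ha : t 0 = a) (hb : t (Fin.last k) = b) (c : Fin k → ℝ) :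
    (1 / 2) * ((∫ x in a..b, f x ^ 2)
        - ∑ i : Fin k, ∫ x in t i.castSucc..t i.succ, (f x - c i) ^ 2)
      ≤ partitionEnergy (fun x => ∫ s in a..x, f s) t := by
  have hmem := ht.mem_Icc_of_le_zero_of_last_le ha.ge hb.le
  have hsq : IntegrableOn (fun x => f x ^ 2) (Icc a b) := hf.integrable_sq
  rw [partitionEnergy_primitive (hf.integrable one_le_two) hmem]
  subst ha hb
  rw [← sum_integral_adjacent_intervals_fin t fun i =>
      hsq.intervalIntegrable_of_mem_Icc (hmem _) (hmem _),
    ← Finset.sum_sub_distrib, Finset.mul_sum]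
  refine Finset.sum_le_sum fun i _ => ?_
  rw [← div_div, div_right_comm, one_div_mul_eq_div]
  gcongr
  exact integral_sq_sub_integral_sub_const_sq_le (ht Fin.castSucc_lt_succ.le)
    (hf.restrict_Ioc_of_mem_Icc (hmem _) (hmem _)) (c i)

theorem sum_integral_sub_const_sq_le (hf : MemLp f 2 (volume.restrict (Icc a b))) {g : ℝ → ℝ}
    (hg : MemLp g 2 (volume.restrict (Icc a b))) (ht : Monotone t) (ha : t 0 = a)
    (hb : t (Fin.last k) = b) (c : Fin k → ℝ) {η : ℝ}
    (hgc : ∀ i : Fin k, ∀ x ∈ Icc (t i.castSucc) (t i.succ), |g x - c i| ≤ η) :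
    ∑ i : Fin k, ∫ x in t i.castSucc..t i.succ, (f x - c i) ^ 2
      ≤ 2 * (∫ x in a..b, (f x - g x) ^ 2) + 2 * η ^ 2 * (b - a) := by
  have hmem := ht.mem_Icc_of_le_zero_of_last_le ha.ge hb.le
  have hfg : IntegrableOn (fun x => (f x - g x) ^ 2) (Icc a b) := (hf.sub hg).integrable_sq
  subst ha hb
  calc ∑ i : Fin k, ∫ x in t i.castSucc..t i.succ, (f x - c i) ^ 2
      ≤ ∑ i : Fin k, (2 * (∫ x in t i.castSucc..t i.succ, (f x - g x) ^ 2)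
          + 2 * η ^ 2 * (t i.succ - t i.castSucc)) := by
        refine Finset.sum_le_sum fun i _ => ?_
        have hfc : IntegrableOn (fun x => (f x - c i) ^ 2) (Icc (t 0) (t (Fin.last k))) :=
          (hf.sub (memLp_const (c i))).integrable_sq
        exact integral_sub_const_sq_le (ht Fin.castSucc_lt_succ.le)
          (hfg.intervalIntegrable_of_mem_Icc (hmem _) (hmem _))
          (hfc.intervalIntegrable_of_mem_Icc (hmem _) (hmem _)) (hgc i)
    _ = 2 * (∫ x in t 0..t (Fin.last k), (f x - g x) ^ 2)
          + 2 * η ^ 2 * (t (Fin.last k) - t 0) := by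
        rw [Finset.sum_add_distrib, ← Finset.mul_sum, ← Finset.mul_sum, Fin.sum_succ_sub_castSucc,
          sum_integral_adjacent_intervals_fin t fun i =>
            hfg.intervalIntegrable_of_mem_Icc (hmem _) (hmem _)]

theorem exists_partitionEnergy_ge (hab : a < b) (hf : MemLp f 2 (volume.restrict (Icc a b)))
    {ε : ℝ} (hε : 0 < ε) :
    ∃ (k : ℕ) (t : Fin (k + 1) → ℝ), StrictMono t ∧ t 0 = a ∧ t (Fin.last k) = b ∧
      (1 / 2) * (∫ x in a..b, f x ^ 2) - ε ≤ partitionEnergy (fun x => ∫ s in a..x, f s) t := by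
  obtain ⟨g, hg, hfg⟩ := hf.exists_boundedContinuous_integral_sub_sq_le (half_pos hε)
  set η := √(ε / (2 * (b - a)))
  have hη : 0 < η := Real.sqrt_pos.2 (div_pos hε (mul_pos two_pos (sub_pos.2 hab)))
  have hη2 : 2 * η ^ 2 * (b - a) = ε := by
    rw [Real.sq_sqrt (div_pos hε (mul_pos two_pos (sub_pos.2 hab))).le]
    field_simp [(sub_pos.2 hab).ne']
  obtain ⟨δ, hδ, hgδ⟩ := Metric.uniformContinuousOn_iff.1
    (isCompact_Icc.uniformContinuousOn_of_continuous g.continuous.continuousOn) η hη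
  obtain ⟨k, hk⟩ := exists_nat_gt ((b - a) / δ)
  have hk0 : (0 : ℝ) < k := (div_pos (sub_pos.2 hab) hδ).trans hk
  have hmesh : (b - a) / k < δ := by
    rw [div_lt_iff₀ hk0]
    rwa [div_lt_iff₀ hδ, mul_comm] at hk
  set t := uniformPartition a b k
  have ht : StrictMono t := strictMono_uniformPartition hab
  have h0 : t 0 = a := uniformPartition_zero
  have hlast : t (Fin.last k) = b := uniformPartition_last (by exact_mod_cast hk0.ne')
  have hmem := ht.monotone.mem_Icc_of_le_zero_of_last_le h0.ge hlast.le
  have hgc (i : Fin k) : ∀ x ∈ Icc (t i.castSucc) (t i.succ), |g x - g (t i.castSucc)| ≤ η := by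
    intro x hx
    have hx' : x ∈ Icc a b := Icc_subset_Icc (hmem _).1 (hmem _).2 hx
    refine (hgδ x hx' _ (hmem _) ?_).le
    rw [Real.dist_eq, abs_of_nonneg (sub_nonneg.2 hx.1)]
    linarith [hx.2, uniformPartition_succ_sub_castSucc (a := a) (b := b) i]
  have hfg' : ∫ x in a..b, (f x - g x) ^ 2 ≤ ε / 2 := by
    rwa [integral_of_le hab.le, ← integral_Icc_eq_integral_Ioc]
  have herr := sum_integral_sub_const_sq_le hf hg ht.monotone h0 hlast _ hgc
  refine ⟨k, t, ht, h0, hlast, le_trans ?_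
    (le_partitionEnergy hf ht.monotone h0 hlast fun i => g (t i.castSucc))⟩
  linarith

end LowerBound

/-- **Partition formula for the Dirichlet energy.** Let `T > 0` and let `f : ℝ → ℝ` be
measurable with `∫₀^T f(s)² ds < ∞`. Define `W(t) := ∫₀^t f(s) ds`. Then the supremum,
over all `k ∈ ℕ` and partitions `0 = t₀ < t₁ < ⋯ < t_k ≤ T`, of
`Σ_{i<k} (W(t_{i+1}) − W(t_i))²/(2(t_{i+1} − t_i))` equals `(1/2)·∫₀^T f(s)² ds`. -/
theorem dirichlet_energy_partition_sup (T : ℝ) (hT : 0 < T)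
    (f : ℝ → ℝ) (hf : Measurable f)
    (hf2 : IntegrableOn (fun s => f s ^ 2) (Set.Icc 0 T)) :
    (⨆ (k : ℕ) (t : Fin (k+1) → ℝ) (_ : StrictMono t) (_ : t 0 = 0)
        (_ : t (Fin.last k) ≤ T),
      (((∑ i : Fin k,
          ((∫ s in (0:ℝ)..(t i.succ), f s) - ∫ s in (0:ℝ)..(t i.castSucc), f s) ^ 2 /
            (2 * (t i.succ - t i.castSucc))) : ℝ) : EReal)) =
    (((1 / 2) * ∫ s in (0:ℝ)..T, f s ^ 2 : ℝ) : EReal) := by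
  have hf' : MemLp f 2 (volume.restrict (Icc 0 T)) :=
    (memLp_two_iff_integrable_sq hf.aestronglyMeasurable).2 hf2
  apply le_antisymm
  · refine iSup_le fun k => iSup_le fun t => iSup_le fun ht => iSup₂_le fun h0 hlast => ?_
    exact EReal.coe_le_coe_iff.2 (partitionEnergy_le hf' ht.monotone h0.ge hlast)
  · refine EReal.ge_of_forall_gt_iff_ge.1 fun z hz => ?_
    obtain ⟨k, t, ht, h0, hlast, hz'⟩ :=
      exists_partitionEnergy_ge hT hf' (sub_pos.2 (EReal.coe_lt_coe_iff.1 hz))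
    refine le_iSup_of_le k <| le_iSup_of_le t <| le_iSup_of_le ht <| le_iSup₂_of_le h0 hlast.le ?_
    exact EReal.coe_le_coe_iff.2 ((sub_sub_cancel _ z).ge.trans hz')
end

section
/- Invariance of the H^{1/2} seminorm under the Cayley transform: let ϑ : ℝ → ℂ be the Cayley map ϑ(t) = (t − i)/(t + i), which maps ℝ into the unit circle. Then for every measurable function u : ℂ → ℝ, ∬_{ℝ×ℝ} (u(ϑ(s)) − u(ϑ(t)))²/(s − t)² ds dt = ∬_{[0,2π)×[0,2π)} (u(e^{iα}) − u(e^{iβ}))²/|e^{iα} − e^{iβ}|² dα dβ, where both sides are Lebesgue integrals of nonnegative functions and the equality holds in [0,∞]. -/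
/-!
The angle `ψ t = π + 2 arctan t` of the Cayley transform (`exp (i ψ t) = ϑ t`) maps `ℝ`
bijectively onto `(0, 2π)` with `ψ' t = 2 / (1 + t²)`, and the chordal distance satisfies
`|ϑ s - ϑ t|² = ψ' s · ψ' t · (s - t)²`. So the Jacobian of `(s, t) ↦ (ψ s, ψ t)` turns one
kernel exactly into the other, and the change of variables formula gives the identity.
-/

open MeasureTheory Set Real
open scoped ENNReal

theorem lintegral_image_prod_image_eq {s t : Set ℝ} {f g f' g' : ℝ → ℝ}
    (hs : MeasurableSet s) (ht : MeasurableSet t)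
    (hf' : ∀ x ∈ s, HasDerivWithinAt f (f' x) s x) (hg' : ∀ y ∈ t, HasDerivWithinAt g (g' y) t y)
    (hf : InjOn f s) (hg : InjOn g t) (G : ℝ × ℝ → ℝ≥0∞) :
    ∫⁻ p in (f '' s) ×ˢ (g '' t), G p
      = ∫⁻ p in s ×ˢ t, ENNReal.ofReal |f' p.1 * g' p.2| * G (f p.1, g p.2) := by
  have hfg' : ∀ p ∈ s ×ˢ t, HasFDerivWithinAt (Prod.map f g)
      ((ContinuousLinearMap.toSpanSingleton ℝ (f' p.1)).prodMap
        (ContinuousLinearMap.toSpanSingleton ℝ (g' p.2))) (s ×ˢ t) p := fun p hp =>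
    ((hf' p.1 hp.1).hasFDerivWithinAt.mono (fst_image_prod_subset s t)).prodMap p
      ((hg' p.2 hp.2).hasFDerivWithinAt.mono (snd_image_prod_subset s t))
  rw [← prodMap_image_prod, lintegral_image_eq_lintegral_abs_det_fderiv_mul volume (hs.prod ht)
    hfg' (hf.prodMap hg)]
  congr! with p
  rw [ContinuousLinearMap.det, ContinuousLinearMap.coe_prodMap, LinearMap.det_prodMap]
  simp

noncomputable def cayleyAngle (t : ℝ) : ℝ := π + 2 * arctan t

theorem hasDerivAt_cayleyAngle (t : ℝ) : HasDerivAt cayleyAngle (2 / (1 + t ^ 2)) t := by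
  have h := ((hasDerivAt_arctan t).const_mul 2).const_add π
  rwa [mul_one_div] at h

theorem cayleyAngle_injective : Function.Injective cayleyAngle := fun a b h =>
  arctan_injective (by unfold cayleyAngle at h; linarith)

theorem range_cayleyAngle : range cayleyAngle = Ioo 0 (2 * π) := by
  ext x
  simp only [mem_range, mem_Ioo, cayleyAngle]
  constructor
  · rintro ⟨t, rfl⟩
    constructor <;> linarith [neg_pi_div_two_lt_arctan t, arctan_lt_pi_div_two t]
  · rintro ⟨h0, h2π⟩
    exact ⟨tan ((x - π) / 2), by rw [arctan_tan (by linarith) (by linarith)]; ring⟩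

theorem ofReal_add_I_ne_zero (t : ℝ) : (t : ℂ) + Complex.I ≠ 0 := fun h => by
  simpa using congrArg Complex.im h

theorem exp_cayleyAngle_mul_I (t : ℝ) :
    Complex.exp (cayleyAngle t * Complex.I) = (t - Complex.I) / (t + Complex.I) := by
  have hpos : (0 : ℝ) < 1 + t ^ 2 := by positivity
  have hcos : cos (cayleyAngle t) = (t ^ 2 - 1) / (1 + t ^ 2) := by
    rw [cayleyAngle, add_comm π, cos_add_pi, cos_two_mul, cos_arctan, div_pow, sq_sqrt hpos.le]
    field_simp
    ring
  have hsin : sin (cayleyAngle t) = -(2 * t) / (1 + t ^ 2) := by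
    rw [cayleyAngle, add_comm π, sin_add_pi, sin_two_mul, sin_arctan, cos_arctan]
    field_simp
    rw [sq_sqrt hpos.le]
  have h10 : (1 : ℂ) + t ^ 2 ≠ 0 := by exact_mod_cast hpos.ne'
  rw [Complex.exp_mul_I, ← Complex.ofReal_cos, ← Complex.ofReal_sin, hcos, hsin,
    eq_div_iff (ofReal_add_I_ne_zero t)]
  push_cast
  field_simp
  linear_combination (-2 * (t : ℂ)) * Complex.I_sq

theorem norm_cayley_sub_cayley_sq (s t : ℝ) :
    ‖(s - Complex.I) / (s + Complex.I) - (t - Complex.I) / (t + Complex.I)‖ ^ 2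
      = 2 / (1 + s ^ 2) * (2 / (1 + t ^ 2)) * (s - t) ^ 2 := by
  have key : (s - Complex.I) / (s + Complex.I) - (t - Complex.I) / (t + Complex.I)
      = 2 * Complex.I * (s - t) / ((s + Complex.I) * (t + Complex.I)) := by
    field_simp [ofReal_add_I_ne_zero]
    ring
  have hnorm : ∀ x : ℝ, ‖(x : ℂ) + Complex.I‖ ^ 2 = 1 + x ^ 2 := fun x => by
    simpa [Complex.sq_norm, add_comm] using Complex.normSq_add_mul_I x 1
  rw [key]
  simp only [norm_div, norm_mul, div_pow, mul_pow, hnorm, ← Complex.ofReal_sub, Complex.norm_real,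
    Real.norm_eq_abs, sq_abs, Complex.norm_I, Complex.norm_ofNat]
  field_simp

/-- Holds also at `s = t`, where both sides are `x / 0 = 0`. -/
theorem div_sq_sub_eq_mul_div_norm_cayley_sub_sq (x s t : ℝ) :
    x / (s - t) ^ 2 = 2 / (1 + s ^ 2) * (2 / (1 + t ^ 2)) *
      (x / ‖(s - Complex.I) / (s + Complex.I) - (t - Complex.I) / (t + Complex.I)‖ ^ 2) := by
  rw [norm_cayley_sub_cayley_sq, mul_div_assoc', mul_div_mul_left x _ (by positivity)]

theorem cayley_H_half_invariance_general (u : ℂ → ℝ) :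
    (∫⁻ p : ℝ × ℝ,
        ENNReal.ofReal
          ((u (((p.1 : ℂ) - Complex.I) / ((p.1 : ℂ) + Complex.I)) -
              u (((p.2 : ℂ) - Complex.I) / ((p.2 : ℂ) + Complex.I))) ^ 2 /
            (p.1 - p.2) ^ 2)) =
      ∫⁻ p in Set.Ico (0:ℝ) (2 * π) ×ˢ Set.Ico (0:ℝ) (2 * π),
        ENNReal.ofReal
          ((u (Complex.exp (p.1 * Complex.I)) - u (Complex.exp (p.2 * Complex.I))) ^ 2 /
            ‖Complex.exp (p.1 * Complex.I) - Complex.exp (p.2 * Complex.I)‖ ^ 2) := by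
  set G : ℝ × ℝ → ℝ≥0∞ := fun p => ENNReal.ofReal
    ((u (Complex.exp (p.1 * Complex.I)) - u (Complex.exp (p.2 * Complex.I))) ^ 2 /
      ‖Complex.exp (p.1 * Complex.I) - Complex.exp (p.2 * Complex.I)‖ ^ 2)
  have hderiv (t : ℝ) : HasDerivWithinAt cayleyAngle (2 / (1 + t ^ 2)) univ t :=
    (hasDerivAt_cayleyAngle t).hasDerivWithinAt
  calc _ = ∫⁻ p, ENNReal.ofReal |2 / (1 + p.1 ^ 2) * (2 / (1 + p.2 ^ 2))| *
        G (cayleyAngle p.1, cayleyAngle p.2) := lintegral_congr fun p => by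
          rw [div_sq_sub_eq_mul_div_norm_cayley_sub_sq, ENNReal.ofReal_mul (by positivity),
            abs_of_pos (by positivity)]
          simp only [G, exp_cayleyAngle_mul_I]
    _ = ∫⁻ p in range cayleyAngle ×ˢ range cayleyAngle, G p := by
      rw [← image_univ, lintegral_image_prod_image_eq MeasurableSet.univ MeasurableSet.univ
        (fun t _ => hderiv t) (fun t _ => hderiv t) cayleyAngle_injective.injOn
        cayleyAngle_injective.injOn, univ_prod_univ, Measure.restrict_univ]
    _ = _ := by
      rw [range_cayleyAngle]
      exact congrArg (lintegral · G)
        (Measure.restrict_congr_set (Measure.set_prod_ae_eq Ioo_ae_eq_Ico Ioo_ae_eq_Ico))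

/-- **Invariance of the `H^{1/2}` seminorm under the Cayley transform.** Let
`ϑ(t) = (t − i)/(t + i)` be the Cayley map sending `ℝ` into the unit circle. Then for every
measurable `u : ℂ → ℝ`,
`∬_{ℝ×ℝ} (u(ϑ(s)) − u(ϑ(t)))²/(s − t)² ds dt
  = ∬_{[0,2π)×[0,2π)} (u(e^{iα}) − u(e^{iβ}))²/|e^{iα} − e^{iβ}|² dα dβ`,
both sides being Lebesgue integrals of nonnegative functions, with values in `[0,∞]`. -/
theorem cayley_H_half_invariance (u : ℂ → ℝ) (hu : Measurable u) :
    (∫⁻ p : ℝ × ℝ,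
        ENNReal.ofReal
          ((u (((p.1 : ℂ) - Complex.I) / ((p.1 : ℂ) + Complex.I)) -
              u (((p.2 : ℂ) - Complex.I) / ((p.2 : ℂ) + Complex.I))) ^ 2 /
            (p.1 - p.2) ^ 2)) =
      ∫⁻ p in Set.Ico (0:ℝ) (2 * π) ×ˢ Set.Ico (0:ℝ) (2 * π),
        ENNReal.ofReal
          ((u (Complex.exp (p.1 * Complex.I)) - u (Complex.exp (p.2 * Complex.I))) ^ 2 /
            ‖Complex.exp (p.1 * Complex.I) - Complex.exp (p.2 * Complex.I)‖ ^ 2) :=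
  cayley_H_half_invariance_general u
end

section
/- Let u : ℝ → ℝ be measurable with finite H^{1/2}(ℝ) seminorm, i.e. ∬_{ℝ×ℝ} (u(s) − u(t))²/(s − t)² ds dt < ∞. Then the measure dμ = e^{u(x)} dx assigns infinite mass to every unbounded interval: for every a ∈ ℝ, ∫_{[a,∞)} e^{u(x)} dx = ∞ and ∫_{(−∞,a]} e^{u(x)} dx = ∞. -/
/-!
Suppose `∫_{[a,∞)} e^u < ∞` and let `m k` be the mean of `u` over the dyadic interval
`J k = (a + 2^k, a + 2^(k+1)]`. Jensen's inequality gives `2^k e^(m k) ≤ ∫_{J k} e^u`, so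
`m k + k log 2` is bounded above. On the other hand, Jensen for `x ↦ x²` on `J k × J (k+1)` bounds
`(m (k+1) - m k)²` by `8` times the `H^{1/2}` energy of `u` on that box; the boxes are disjoint, so
these increments tend to `0` and `m k` cannot decrease linearly. The half-line `(-∞, a]` is the
case of `x ↦ u (-x)`.
-/

open MeasureTheory Set Filter Function Topology Real
open scoped ENNReal

theorem not_bddAbove_add_mul_of_tendsto_succ_sub {m : ℕ → ℝ}
    (hm : Tendsto (fun k => m (k + 1) - m k) atTop (𝓝 0)) {c : ℝ} (hc : 0 < c) :
    ¬ BddAbove (range fun k : ℕ => m k + c * k) := by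
  rintro ⟨C, hC⟩
  obtain ⟨K, hK⟩ := eventually_atTop.1 (hm.eventually (Ioi_mem_nhds (neg_lt_zero.2 (half_pos hc))))
  have hgrowth : ∀ n : ℕ, m K + c * K + c / 2 * n ≤ m (K + n) + c * ↑(K + n) := by
    intro n
    induction n with
    | zero => simp
    | succ n ih =>
      have := hK (K + n) (Nat.le_add_right K n)
      push_cast at ih ⊢
      rw [← add_assoc]
      linarith
  obtain ⟨n, hn⟩ := exists_nat_gt ((C - m K - c * K) / (c / 2))
  rw [div_lt_iff₀ (half_pos hc)] at hn
  linarith [hgrowth n, hC (mem_range_self (K + n))]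

theorem measureReal_mul_exp_setAverage_le {α : Type*} [MeasurableSpace α] {μ : Measure α}
    {s : Set α} {f : α → ℝ} (h0 : μ s ≠ 0) (hfin : μ s ≠ ∞) (hf : IntegrableOn f s μ)
    (hexp : IntegrableOn (fun x => exp (f x)) s μ) :
    μ.real s * exp (⨍ x in s, f x ∂μ) ≤ ∫ x in s, exp (f x) ∂μ := by
  have hjensen := convexOn_exp.map_set_average_le continuousOn_exp isClosed_univ h0 hfin
    (ae_of_all _ fun _ => mem_univ _) hf hexp
  rw [← measure_smul_setAverage _ hfin, smul_eq_mul]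
  exact mul_le_mul_of_nonneg_left hjensen measureReal_nonneg

theorem integrableOn_of_integrableOn_sub_prod {α : Type*} [MeasurableSpace α] {μ : Measure α}
    [SFinite μ] {u : α → ℝ} {A B : Set α} (hA : μ A ≠ 0) (hB : μ B ≠ ∞)
    (h : IntegrableOn (fun p : α × α => u p.1 - u p.2) (A ×ˢ B) (μ.prod μ)) :
    IntegrableOn u B μ := by
  rw [IntegrableOn, ← Measure.prod_restrict] at h
  have : (ae (μ.restrict A)).NeBot := ae_restrict_neBot.2 hA
  have : IsFiniteMeasure (μ.restrict B) := isFiniteMeasure_restrict.2 hB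
  obtain ⟨s, hs⟩ := h.prod_right_ae.exists
  exact ((integrable_const (u s)).sub hs).congr (ae_of_all _ fun y => by simp)

/-- The `H^{1/2}` energy of `u` on `S`, without the normalising factor `1 / (2π²)`. -/
noncomputable def halfEnergy (u : ℝ → ℝ) (S : Set (ℝ × ℝ)) : ℝ≥0∞ :=
  ∫⁻ p in S, ENNReal.ofReal ((u p.1 - u p.2) ^ 2 / (p.1 - p.2) ^ 2)

section

variable {u : ℝ → ℝ}

theorem lintegral_sq_sub_le_halfEnergy {S : Set (ℝ × ℝ)} (hS : MeasurableSet S) {D : ℝ}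
    (hD : ∀ p ∈ S, |p.1 - p.2| ≤ D) :
    ∫⁻ p in S, ENNReal.ofReal ((u p.1 - u p.2) ^ 2) ≤ ENNReal.ofReal (D ^ 2) * halfEnergy u S := by
  rw [halfEnergy, ← lintegral_const_mul' _ _ ENNReal.ofReal_ne_top]
  refine setLIntegral_mono' hS fun p hp => ?_
  rw [← ENNReal.ofReal_mul (sq_nonneg D)]
  refine ENNReal.ofReal_le_ofReal ?_
  rcases eq_or_ne p.1 p.2 with h | h
  · simp [h]
  · have hsq : (p.1 - p.2) ^ 2 ≤ D ^ 2 := by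
      simpa only [sq_abs] using pow_le_pow_left₀ (abs_nonneg _) (hD p hp) 2
    calc (u p.1 - u p.2) ^ 2 = (p.1 - p.2) ^ 2 * ((u p.1 - u p.2) ^ 2 / (p.1 - p.2) ^ 2) := by
          field_simp [sub_ne_zero.2 h]
      _ ≤ D ^ 2 * ((u p.1 - u p.2) ^ 2 / (p.1 - p.2) ^ 2) := by gcongr

theorem memLp_two_sub_of_halfEnergy_ne_top (hu : Measurable u) {S : Set (ℝ × ℝ)}
    (hS : MeasurableSet S) {D : ℝ} (hD : ∀ p ∈ S, |p.1 - p.2| ≤ D) (hE : halfEnergy u S ≠ ∞) :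
    MemLp (fun p : ℝ × ℝ => u p.1 - u p.2) 2 (volume.restrict S) := by
  have hmeas : Measurable fun p : ℝ × ℝ => u p.1 - u p.2 :=
    (hu.comp measurable_fst).sub (hu.comp measurable_snd)
  refine (memLp_two_iff_integrable_sq hmeas.aestronglyMeasurable).2
    ⟨(hmeas.pow_const 2).aestronglyMeasurable, ?_⟩
  refine (hasFiniteIntegral_iff_ofReal (ae_of_all _ fun p => sq_nonneg _)).2 ?_
  exact (lintegral_sq_sub_le_halfEnergy hS hD).trans_lt
    (ENNReal.mul_lt_top ENNReal.ofReal_lt_top hE.lt_top)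

theorem halfEnergy_mono {S T : Set (ℝ × ℝ)} (h : S ⊆ T) : halfEnergy u S ≤ halfEnergy u T :=
  lintegral_mono_set h

theorem halfEnergy_comp_neg : halfEnergy (fun x => u (-x)) univ = halfEnergy u univ := by
  simp only [halfEnergy, Measure.restrict_univ]
  rw [← (Measure.measurePreserving_neg (volume : Measure (ℝ × ℝ))).lintegral_comp_emb
    (Homeomorph.neg _).measurableEmbedding]
  congr 1 with p
  simp only [Prod.fst_neg, Prod.snd_neg]
  ring_nf

theorem locallyIntegrable_of_halfEnergy_ne_top (hu : Measurable u) (hE : halfEnergy u univ ≠ ∞) :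
    LocallyIntegrable u := by
  intro x
  set A := Icc (x - 1) (x + 1)
  refine ⟨A, Icc_mem_nhds (by linarith) (by linarith), ?_⟩
  have hvol : volume A = ENNReal.ofReal 2 := by rw [Real.volume_Icc]; ring_nf
  have hD : ∀ p ∈ A ×ˢ A, |p.1 - p.2| ≤ 2 := by
    rintro p ⟨⟨h1, h2⟩, h3, h4⟩
    rw [abs_sub_le_iff]; constructor <;> linarith
  have : IsFiniteMeasure (volume.restrict (A ×ˢ A)) := isFiniteMeasure_restrict.2
    (by rw [Measure.volume_eq_prod, Measure.prod_prod, hvol]; finiteness)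
  refine integrableOn_of_integrableOn_sub_prod (A := A) (by simp [hvol]) (by simp [hvol]) ?_
  rw [← Measure.volume_eq_prod]
  exact (memLp_two_sub_of_halfEnergy_ne_top hu (measurableSet_Icc.prod measurableSet_Icc) hD
    (ne_top_of_le_ne_top hE (halfEnergy_mono (subset_univ _)))).integrable one_le_two

theorem setAverage_prod_sub {A B : Set ℝ} (hA0 : volume A ≠ 0) (hB0 : volume B ≠ 0)
    (hAfin : volume A ≠ ∞) (hBfin : volume B ≠ ∞) (hAu : IntegrableOn u A)
    (hBu : IntegrableOn u B) :
    ⨍ p in A ×ˢ B, (u p.1 - u p.2) = (⨍ x in A, u x) - ⨍ x in B, u x := by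
  have : IsFiniteMeasure (volume.restrict A) := isFiniteMeasure_restrict.2 hAfin
  have : IsFiniteMeasure (volume.restrict B) := isFiniteMeasure_restrict.2 hBfin
  have hApos : 0 < volume.real A := ENNReal.toReal_pos hA0 hAfin
  have hBpos : 0 < volume.real B := ENNReal.toReal_pos hB0 hBfin
  rw [Measure.volume_eq_prod, ← Measure.prod_restrict, average_eq,
    integral_sub (hAu.comp_fst _) (hBu.comp_snd _), integral_fun_fst, integral_fun_snd,
    setAverage_eq, setAverage_eq, ← univ_prod_univ, measureReal_def, Measure.prod_prod]
  simp only [measureReal_def, Measure.restrict_apply_univ, ENNReal.toReal_mul,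
    smul_eq_mul] at hApos hBpos ⊢
  field_simp

theorem sq_setAverage_sub_le (hu : Measurable u) {A B : Set ℝ} (hA : MeasurableSet A)
    (hB : MeasurableSet B) (hA0 : volume A ≠ 0) (hB0 : volume B ≠ 0) (hAfin : volume A ≠ ∞)
    (hBfin : volume B ≠ ∞) (hAu : IntegrableOn u A) (hBu : IntegrableOn u B) {D : ℝ}
    (hD : ∀ s ∈ A, ∀ t ∈ B, |s - t| ≤ D) (hE : halfEnergy u (A ×ˢ B) ≠ ∞) :
    ((⨍ x in A, u x) - ⨍ x in B, u x) ^ 2 ≤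
      D ^ 2 * (halfEnergy u (A ×ˢ B)).toReal / (volume.real A * volume.real B) := by
  set μ := volume.restrict (A ×ˢ B)
  have hμuniv : μ.real univ = volume.real A * volume.real B := by
    rw [measureReal_restrict_apply_univ, measureReal_def, Measure.volume_eq_prod,
      Measure.prod_prod, ENNReal.toReal_mul]
    rfl
  have hvol : 0 < volume.real A * volume.real B :=
    mul_pos (ENNReal.toReal_pos hA0 hAfin) (ENNReal.toReal_pos hB0 hBfin)
  have : IsFiniteMeasure μ := isFiniteMeasure_restrict.2 (by
    rw [Measure.volume_eq_prod, Measure.prod_prod]; exact ENNReal.mul_ne_top hAfin hBfin)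
  have : NeZero μ := ⟨fun h => hvol.ne' (by rw [← hμuniv, h]; simp)⟩
  have hf2 := memLp_two_sub_of_halfEnergy_ne_top hu (hA.prod hB)
    (fun p hp => hD _ hp.1 _ hp.2) hE
  have hf2' := (memLp_two_iff_integrable_sq hf2.1).1 hf2
  have hjensen : (⨍ p, (u p.1 - u p.2) ∂μ) ^ 2 ≤ ⨍ p, (u p.1 - u p.2) ^ 2 ∂μ :=
    even_two.convexOn_pow.map_average_le (continuous_pow 2).continuousOn isClosed_univ
      (ae_of_all _ fun _ => mem_univ _) (hf2.integrable one_le_two) hf2'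
  have hsq : ∫ p, (u p.1 - u p.2) ^ 2 ∂μ ≤ D ^ 2 * (halfEnergy u (A ×ˢ B)).toReal := by
    rw [integral_eq_lintegral_of_nonneg_ae (ae_of_all _ fun _ => sq_nonneg _) hf2'.1,
      ← ENNReal.toReal_ofReal (sq_nonneg D), ← ENNReal.toReal_mul]
    exact ENNReal.toReal_mono (ENNReal.mul_ne_top ENNReal.ofReal_ne_top hE)
      (lintegral_sq_sub_le_halfEnergy (hA.prod hB) fun p hp => hD _ hp.1 _ hp.2)
  rw [← setAverage_prod_sub hA0 hB0 hAfin hBfin hAu hBu, le_div_iff₀ hvol]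
  calc (⨍ p, (u p.1 - u p.2) ∂μ) ^ 2 * (volume.real A * volume.real B)
      ≤ (⨍ p, (u p.1 - u p.2) ^ 2 ∂μ) * (volume.real A * volume.real B) := by gcongr
    _ = ∫ p, (u p.1 - u p.2) ^ 2 ∂μ := by
      rw [mul_comm, ← hμuniv, ← smul_eq_mul, measure_smul_average]
    _ ≤ _ := hsq

theorem tendsto_halfEnergy_of_pairwise_disjoint (hE : halfEnergy u univ ≠ ∞)
    {S : ℕ → Set (ℝ × ℝ)} (hS : ∀ k, MeasurableSet (S k)) (hdisj : Pairwise (Disjoint on S)) :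
    Tendsto (fun k => halfEnergy u (S k)) atTop (𝓝 0) := by
  refine ENNReal.tendsto_atTop_zero_of_tsum_ne_top (ne_top_of_le_ne_top hE ?_)
  simp only [halfEnergy]
  rw [← lintegral_iUnion hS hdisj]
  exact lintegral_mono_set (subset_univ _)

def dyadicIoc (a : ℝ) (k : ℕ) : Set ℝ := Ioc (a + 2 ^ k) (a + 2 ^ (k + 1))

theorem measurableSet_dyadicIoc (a : ℝ) (k : ℕ) : MeasurableSet (dyadicIoc a k) :=
  measurableSet_Ioc

theorem volume_dyadicIoc (a : ℝ) (k : ℕ) : volume (dyadicIoc a k) = ENNReal.ofReal (2 ^ k) := by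
  rw [dyadicIoc, Real.volume_Ioc, pow_succ]
  ring_nf

theorem volume_real_dyadicIoc (a : ℝ) (k : ℕ) : volume.real (dyadicIoc a k) = 2 ^ k := by
  rw [measureReal_def, volume_dyadicIoc, ENNReal.toReal_ofReal (by positivity)]

theorem pairwise_disjoint_dyadicIoc (a : ℝ) : Pairwise (Disjoint on dyadicIoc a) :=
  (monotone_const.add (pow_right_mono₀ one_le_two)).pairwise_disjoint_on_Ioc_succ

theorem dyadicIoc_subset_Ici (a : ℝ) (k : ℕ) : dyadicIoc a k ⊆ Ici a :=
  fun _ hx => (le_add_of_nonneg_right (by positivity)).trans hx.1.le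

theorem MeasureTheory.LocallyIntegrable.integrableOn_dyadicIoc (hu : LocallyIntegrable u) (a : ℝ) (k : ℕ) :
    IntegrableOn u (dyadicIoc a k) :=
  (hu.integrableOn_isCompact isCompact_Icc).mono_set Ioc_subset_Icc_self

theorem abs_sub_le_of_mem_dyadicIoc {a s t : ℝ} {k : ℕ} (hs : s ∈ dyadicIoc a k)
    (ht : t ∈ dyadicIoc a (k + 1)) : |s - t| ≤ 2 ^ (k + 2) := by
  obtain ⟨hs1, hs2⟩ := hs
  obtain ⟨ht1, ht2⟩ := ht
  have : (0 : ℝ) < 2 ^ k := by positivity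
  simp only [pow_succ] at *
  rw [abs_sub_le_iff]
  constructor <;> linarith

theorem sq_setAverage_dyadicIoc_sub_le (hu : Measurable u) (hE : halfEnergy u univ ≠ ∞)
    (a : ℝ) (k : ℕ) :
    ((⨍ x in dyadicIoc a k, u x) - ⨍ x in dyadicIoc a (k + 1), u x) ^ 2 ≤
      8 * (halfEnergy u (dyadicIoc a k ×ˢ dyadicIoc a (k + 1))).toReal := by
  have hint := (locallyIntegrable_of_halfEnergy_ne_top hu hE).integrableOn_dyadicIoc a
  have hmean := sq_setAverage_sub_le hu (measurableSet_dyadicIoc a k)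
    (measurableSet_dyadicIoc a (k + 1)) (by simp [volume_dyadicIoc]) (by simp [volume_dyadicIoc])
    (by simp [volume_dyadicIoc]) (by simp [volume_dyadicIoc]) (hint k) (hint (k + 1))
    (fun s hs t ht => abs_sub_le_of_mem_dyadicIoc hs ht)
    (ne_top_of_le_ne_top hE (halfEnergy_mono (subset_univ _)))
  rw [volume_real_dyadicIoc, volume_real_dyadicIoc] at hmean
  refine hmean.trans_eq ?_
  field_simp
  ring

theorem tendsto_setAverage_dyadicIoc_succ_sub (hu : Measurable u) (hE : halfEnergy u univ ≠ ∞)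
    (a : ℝ) :
    Tendsto (fun k => (⨍ x in dyadicIoc a (k + 1), u x) - ⨍ x in dyadicIoc a k, u x) atTop
      (𝓝 0) := by
  have hlim := tendsto_halfEnergy_of_pairwise_disjoint hE
    (fun k => (measurableSet_dyadicIoc a k).prod (measurableSet_dyadicIoc a (k + 1)))
    fun i j hij => disjoint_prod.2 (Or.inl (pairwise_disjoint_dyadicIoc a hij))
  have hbound : Tendsto
      (fun k => √(8 * (halfEnergy u (dyadicIoc a k ×ˢ dyadicIoc a (k + 1))).toReal)) atTop
      (𝓝 0) := by
    simpa using (((ENNReal.tendsto_toReal ENNReal.zero_ne_top).comp hlim).const_mul 8).sqrt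
  refine squeeze_zero_norm (fun k => ?_) hbound
  rw [Real.norm_eq_abs, ← Real.sqrt_sq_eq_abs, ← neg_sub, neg_sq]
  exact Real.sqrt_le_sqrt (sq_setAverage_dyadicIoc_sub_le hu hE a k)

theorem lintegral_exp_Ici_eq_top (hu : Measurable u) (hE : halfEnergy u univ ≠ ∞) (a : ℝ) :
    ∫⁻ x in Ici a, ENNReal.ofReal (exp (u x)) = ∞ := by
  by_contra hT
  have hexp : IntegrableOn (fun x => exp (u x)) (Ici a) :=
    ⟨(measurable_exp.comp hu).aestronglyMeasurable,
      (hasFiniteIntegral_iff_ofReal (ae_of_all _ fun _ => (exp_pos _).le)).2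
        (lt_top_iff_ne_top.2 hT)⟩
  have hloc := locallyIntegrable_of_halfEnergy_ne_top hu hE
  refine not_bddAbove_add_mul_of_tendsto_succ_sub (m := fun k => ⨍ x in dyadicIoc a k, u x)
    (tendsto_setAverage_dyadicIoc_succ_sub hu hE a)
    (log_pos one_lt_two) ⟨log (∫ x in Ici a, exp (u x)), forall_mem_range.2 fun k => ?_⟩
  have hjensen := measureReal_mul_exp_setAverage_le (by simp [volume_dyadicIoc])
    (by simp [volume_dyadicIoc]) (hloc.integrableOn_dyadicIoc a k)
    (hexp.mono_set (dyadicIoc_subset_Ici a k))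
  have hmono : ∫ x in dyadicIoc a k, exp (u x) ≤ ∫ x in Ici a, exp (u x) :=
    setIntegral_mono_set hexp (ae_of_all _ fun _ => (exp_pos _).le)
      (dyadicIoc_subset_Ici a k).eventuallyLE
  rw [volume_real_dyadicIoc] at hjensen
  rw [le_log_iff_exp_le (lt_of_lt_of_le (by positivity) (hjensen.trans hmono)), exp_add,
    mul_comm (log 2), exp_nat_mul, exp_log two_pos, mul_comm]
  exact hjensen.trans hmono

end

/-- **`e^u dx` has infinite mass on unbounded intervals for `u ∈ H^{1/2}(ℝ)`.**
Let `u : ℝ → ℝ` be measurable with finite `H^{1/2}(ℝ)` seminorm, i.e.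
`∬_{ℝ×ℝ} (u(s) − u(t))²/(s − t)² ds dt < ∞`. Then for every `a ∈ ℝ`,
`∫_{[a,∞)} e^{u(x)} dx = ∞` and `∫_{(−∞,a]} e^{u(x)} dx = ∞`. -/
theorem exp_H_half_infinite_mass (u : ℝ → ℝ) (hu : Measurable u)
    (hH : (∫⁻ p : ℝ × ℝ, ENNReal.ofReal ((u p.1 - u p.2) ^ 2 / (p.1 - p.2) ^ 2)) < ⊤) :
    ∀ a : ℝ,
      (∫⁻ x in Set.Ici a, ENNReal.ofReal (Real.exp (u x))) = ⊤ ∧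
      (∫⁻ x in Set.Iic a, ENNReal.ofReal (Real.exp (u x))) = ⊤ := by
  have hE : halfEnergy u univ ≠ ∞ := by rw [halfEnergy, Measure.restrict_univ]; exact hH.ne
  intro a
  refine ⟨lintegral_exp_Ici_eq_top hu hE a, ?_⟩
  have hneg := lintegral_exp_Ici_eq_top (u := fun x => u (-x)) (hu.comp measurable_neg)
    (by rwa [halfEnergy_comp_neg]) (-a)
  rwa [← neg_Iic, ← neg_preimage,
    (Measure.measurePreserving_neg volume).setLIntegral_comp_preimage_emb
      (Homeomorph.neg ℝ).measurableEmbedding (fun x => ENNReal.ofReal (exp (u x)))] at hneg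
end

section
/- An integer-valued VMO function is constant: let v : ℝ → ℝ be locally integrable with v(x) ∈ ℤ for almost every x ∈ ℝ, and suppose v has vanishing mean oscillation, i.e. sup over bounded intervals I with length |I| ≤ δ of (1/|I|)∫_I |v(x) − v_I| dx tends to 0 as δ → 0+. Then there exists n ∈ ℤ such that v(x) = n for almost every x ∈ ℝ. -/
/-!
On a short interval the mean `v_I` lies within the mean oscillation of `v` on `I` of the nearest
integer, because `|v_I - round v_I| ≤ |v_I - v x|` wherever `v x` is an integer. The mean
depends continuously on the endpoints, and the short intervals form a connected family, so the
nearest integer `n` cannot jump: it is the same for every short interval.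
Taking the oscillation bound `1/4`, Lebesgue differentiation then gives
`v x = lim v_{(x, x + h]} ∈ [n - 1/4, n + 1/4]` for almost every `x`, and since `v x` is an
integer, `v x = n`.
-/

open MeasureTheory Set Filter Topology

noncomputable def intervalMean (v : ℝ → ℝ) (a b : ℝ) : ℝ :=
  (b - a)⁻¹ * ∫ x in Ioc a b, v x

theorem measureReal_univ_mul_abs_sub_round_le_integral {α : Type*} [MeasurableSpace α]
    {μ : Measure α} [IsFiniteMeasure μ] {v : α → ℝ} (hv : Integrable v μ)
    (hint : ∀ᵐ x ∂μ, ∃ n : ℤ, v x = n) (c : ℝ) :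
    μ.real univ * |c - round c| ≤ ∫ x, |v x - c| ∂μ := by
  rw [← smul_eq_mul, ← integral_const]
  refine integral_mono_ae (integrable_const _) ((hv.sub (integrable_const c)).abs) ?_
  filter_upwards [hint] with x ⟨n, hn⟩
  simpa only [hn, abs_sub_comm] using round_le c n

theorem abs_intervalMean_sub_round_le {v : ℝ → ℝ} (hloc : LocallyIntegrable v volume)
    (hint : ∀ᵐ x : ℝ, ∃ n : ℤ, v x = n) {a b : ℝ} (hab : a < b) :
    |intervalMean v a b - round (intervalMean v a b)| ≤
      (b - a)⁻¹ * ∫ x in Ioc a b, |v x - intervalMean v a b| := by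
  have hv : IntegrableOn v (Ioc a b) :=
    (hloc.integrableOn_isCompact isCompact_Icc).mono_set Ioc_subset_Icc_self
  have key := measureReal_univ_mul_abs_sub_round_le_integral hv (ae_restrict_of_ae hint)
    (intervalMean v a b)
  rw [measureReal_restrict_apply_univ, Real.volume_real_Ioc_of_le hab.le] at key
  rwa [le_inv_mul_iff₀ (sub_pos.mpr hab)]

theorem intervalMean_eq_primitive_sub {v : ℝ → ℝ} (hloc : LocallyIntegrable v volume)
    {a b : ℝ} (hab : a ≤ b) (c : ℝ) :
    intervalMean v a b = (b - a)⁻¹ * ((∫ x in c..b, v x) - ∫ x in c..a, v x) := by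
  have hii (s t : ℝ) : IntervalIntegrable v volume s t :=
    (hloc.integrableOn_isCompact isCompact_uIcc).intervalIntegrable
  rw [intervalIntegral.integral_interval_sub_left (hii c b) (hii c a),
    intervalIntegral.integral_of_le hab, intervalMean]

theorem continuousOn_intervalMean {v : ℝ → ℝ} (hloc : LocallyIntegrable v volume) :
    ContinuousOn (fun p : ℝ × ℝ => intervalMean v p.1 p.2) {p | p.1 < p.2} := by
  have hF : Continuous fun t => ∫ x in (0 : ℝ)..t, v x :=
    intervalIntegral.continuous_primitive
      (fun s t => (hloc.integrableOn_isCompact isCompact_uIcc).intervalIntegrable) 0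
  refine ContinuousOn.congr ?_ fun p (hp : p.1 < p.2) => intervalMean_eq_primitive_sub hloc hp.le 0
  refine ContinuousOn.mul ?_ ((hF.comp continuous_snd).sub (hF.comp continuous_fst)).continuousOn
  exact (continuous_snd.sub continuous_fst).continuousOn.inv₀ fun p (hp : p.1 < p.2) =>
    (sub_pos.mpr hp).ne'

theorem ae_tendsto_intervalMean {v : ℝ → ℝ} (hloc : LocallyIntegrable v volume) :
    ∀ᵐ x, Tendsto (intervalMean v x) (𝓝[>] x) (𝓝 (v x)) := by
  filter_upwards [_root_.LocallyIntegrable.ae_hasDerivAt_integral hloc] with x hx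
  refine ((hasDerivAt_iff_tendsto_slope.mp (hx x)).mono_left
    (nhdsWithin_mono _ fun _ hb => ne_of_gt hb)).congr' ?_
  filter_upwards [self_mem_nhdsWithin] with b (hb : x < b)
  rw [intervalMean_eq_primitive_sub hloc hb.le x, slope_def_field, inv_mul_eq_div]

theorem round_eq_round_of_isPreconnected {S : Set ℝ} (hS : IsPreconnected S)
    (hnear : ∀ y ∈ S, |y - round y| < 1 / 2) {y z : ℝ} (hy : y ∈ S) (hz : z ∈ S) :
    round y = round z := by
  wlog hlt : round y < round z generalizing y z
  · rcases (not_lt.mp hlt).lt_or_eq with h | h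
    · exact (this hz hy h).symm
    · exact h.symm
  -- `S` is an interval, so it contains the half-integer between `y` and `z`
  have hw : (round y : ℝ) + 2⁻¹ ∈ S := by
    have hyn := abs_lt.mp (hnear y hy)
    have hzn := abs_lt.mp (hnear z hz)
    have hyz : (round y : ℝ) + 1 ≤ round z := by exact_mod_cast hlt
    exact hS.Icc_subset hy hz ⟨by linarith, by linarith⟩
  have hw_near := hnear _ hw
  rw [round_intCast_add, round_two_inv] at hw_near
  norm_num at hw_near

theorem exists_round_intervalMean_eq {v : ℝ → ℝ} (hloc : LocallyIntegrable v volume)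
    {δ η : ℝ} (hδ : 0 < δ) (hη : η < 1 / 2)
    (hnear : ∀ a b, a < b → b - a ≤ δ →
      |intervalMean v a b - round (intervalMean v a b)| ≤ η) :
    ∃ n : ℤ, ∀ a b, a < b → b - a ≤ δ → round (intervalMean v a b) = n := by
  set S : Set (ℝ × ℝ) := {p | p.1 < p.2 ∧ p.2 - p.1 ≤ δ}
  have hS : IsPreconnected ((fun p : ℝ × ℝ => intervalMean v p.1 p.2) '' S) := by
    refine IsPreconnected.image ?_ _ ((continuousOn_intervalMean hloc).mono fun p hp => hp.1)
    have hS_eq : S = (LinearMap.snd ℝ ℝ ℝ - LinearMap.fst ℝ ℝ ℝ) ⁻¹' Ioc 0 δ := by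
      ext p; simp [S, sub_pos]
    rw [hS_eq]
    exact ((convex_Ioc 0 δ).linear_preimage _).isPreconnected
  refine ⟨round (intervalMean v 0 δ), fun a b hab hlen => ?_⟩
  refine round_eq_round_of_isPreconnected hS ?_ ⟨(a, b), ⟨hab, hlen⟩, rfl⟩
    ⟨(0, δ), ⟨hδ, by simp⟩, rfl⟩
  rintro _ ⟨p, hp, rfl⟩
  linarith [hnear p.1 p.2 hp.1 hp.2]

/-- **An integer-valued VMO function is constant.** Let `v : ℝ → ℝ` be locally integrable
with `v(x) ∈ ℤ` for almost every `x`, and suppose `v` has vanishing mean oscillation: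
the supremum over bounded intervals `I` with `|I| ≤ δ` of the mean oscillation
`(1/|I|)·∫_I |v − v_I|` tends to `0` as `δ → 0+`. Then `v` is a.e. equal to an integer
constant. -/
theorem integer_valued_VMO_constant (v : ℝ → ℝ)
    (hloc : LocallyIntegrable v volume)
    (hint : ∀ᵐ x : ℝ, ∃ n : ℤ, v x = (n : ℝ))
    (hVMO : ∀ η : ℝ, 0 < η → ∃ δ : ℝ, 0 < δ ∧ ∀ a b : ℝ, a < b → b - a ≤ δ →
      (b - a)⁻¹ *
          ∫ x in Set.Ioc a b, |v x - (b - a)⁻¹ * ∫ y in Set.Ioc a b, v y| ≤ η) :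
    ∃ n : ℤ, ∀ᵐ x : ℝ, v x = (n : ℝ) := by
  obtain ⟨δ, hδ, hosc⟩ := hVMO (1 / 4) (by norm_num)
  have hnear (a b : ℝ) (hab : a < b) (hlen : b - a ≤ δ) :
      |intervalMean v a b - round (intervalMean v a b)| ≤ 1 / 4 :=
    (abs_intervalMean_sub_round_le hloc hint hab).trans (hosc a b hab hlen)
  obtain ⟨n, hn⟩ := exists_round_intervalMean_eq hloc hδ (by norm_num) hnear
  refine ⟨n, ?_⟩
  filter_upwards [hint, ae_tendsto_intervalMean hloc] with x ⟨k, hk⟩ hlim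
  have hclose : v x ∈ Icc (n - 1 / 4 : ℝ) (n + 1 / 4) := by
    refine isClosed_Icc.mem_of_tendsto hlim ?_
    filter_upwards [Ioc_mem_nhdsGT (lt_add_of_pos_right x hδ)] with b ⟨hxb, hbδ⟩
    have hlen : b - x ≤ δ := by linarith
    have hb := abs_le.mp (hnear x b hxb hlen)
    rw [hn x b hxb hlen] at hb
    constructor <;> linarith [hb.1, hb.2]
  have hkn : round (v x) = n := round_eq_iff.mpr ⟨by linarith [hclose.1], by linarith [hclose.2]⟩
  rw [hk, round_intCast] at hkn
  rw [hk, hkn]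
end
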